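/- arXiv:2209.12679 — 9 statements merged into one kernel-verified Lean document; each statement's English description precedes it below -/
import Mathlib

section
/- Let X and Y be Banach spaces, V a closed subspace of X such that the space of continuous linear maps L(V,Y) is separable, G ⊆ X an open set, and f : G → Y a continuous mapping. Then the set of all points a ∈ G such that f is Fréchet differentiable at a along V but is not strictly differentiable at a along V is a meager (first category) set. -/
open Metric Set Topology

variable {X Y : Type*} [NormedAddCommGroup X] [NormedSpace ℝ X] [CompleteSpace X]
  [NormedAddCommGroup Y] [NormedSpace ℝ Y] [CompleteSpace Y]

/-- `f` is Fréchet differentiable at `a` along the subspace `V`: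
the map `v ↦ f (a + v)`, `v ∈ V`, is Fréchet differentiable at `0 ∈ V`. -/
def FrechetDiffAlong (f : X → Y) (V : Submodule ℝ X) (a : X) : Prop :=
  DifferentiableAt ℝ (fun v : V => f (a + (v : X))) (0 : V)

/-- The derivative of `f` at `a` along `V`. -/
noncomputable def derivAlong (f : X → Y) (V : Submodule ℝ X) (a : X) : V →L[ℝ] Y :=
  fderiv ℝ (fun v : V => f (a + (v : X))) (0 : V)

/-- `f` is strictly differentiable at `a` along `V`. -/
def StrictDiffAlong (f : X → Y) (V : Submodule ℝ X) (a : X) : Prop :=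
  FrechetDiffAlong f V a ∧
    ∀ ε > (0 : ℝ), ∃ δ > (0 : ℝ), ∀ (x : X) (v : V),
      x ∈ ball a δ → x + (v : X) ∈ ball a δ →
        ‖f (x + (v : X)) - f x - derivAlong f V a v‖ ≤ ε * ‖(v : X)‖

/-! Fix a dense sequence `L k` in `V →L[ℝ] Y`. For `ε = 1/(m+1)` and `δ = 1/(n+1)`, the set
`approxSet f G (L k) ε δ` of points `a` with `ball a δ ⊆ G` at which `L k` approximates every
increment `f (a + v) - f a`, `‖v‖ < δ`, up to `ε ‖v‖` is closed because `f` is continuous, so its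
frontier is nowhere dense. At a point where `f` is differentiable along `V`, some `L k` is `ε`-close
to the derivative, which puts the point in one of these sets; were it in the interior, the estimate
would hold at all nearby base points, which is strict differentiability up to `2ε`. So the bad set
lies in the countable union of the frontiers. -/

lemma isClosed_setOf_ball_subset {α : Type*} [PseudoMetricSpace α] (G : Set α) (δ : ℝ) :
    IsClosed {a | ball a δ ⊆ G} := by
  have hset : {a | ball a δ ⊆ G} = ⋂ y ∈ Gᶜ, {a | δ ≤ dist y a} := by
    ext a
    simp only [mem_ofPred_eq, mem_iInter, subset_def, mem_ball, mem_compl_iff]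
    exact forall_congr' fun y => by rw [← not_lt, not_imp_not]
  rw [hset]
  exact isClosed_biInter fun y _ => isClosed_le continuous_const (continuous_const.dist continuous_id)

lemma IsClosed.isNowhereDense_frontier {α : Type*} [TopologicalSpace α] {s : Set α}
    (hs : IsClosed s) : IsNowhereDense (frontier s) :=
  isClosed_frontier.isNowhereDense_iff.2 (interior_frontier hs)

lemma ContinuousLinearMap.norm_sub_apply_le {E F : Type*} [SeminormedAddCommGroup E]
    [NormedSpace ℝ E] [SeminormedAddCommGroup F] [NormedSpace ℝ F]
    (w : F) (A B : E →L[ℝ] F) (v : E) : ‖w - B v‖ ≤ ‖w - A v‖ + ‖A - B‖ * ‖v‖ :=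
  calc ‖w - B v‖ = ‖(w - A v) + (A - B) v‖ := by
        rw [sub_apply, sub_add_sub_cancel]
    _ ≤ ‖w - A v‖ + ‖A - B‖ * ‖v‖ := (norm_add_le _ _).trans (by gcongr; exact (A - B).le_opNorm v)

section ApproxSet

variable {E F : Type*} [NormedAddCommGroup E] [NormedSpace ℝ E] [NormedAddCommGroup F]
  [NormedSpace ℝ F] {V : Submodule ℝ E} {f : E → F} {G : Set E} {A : V →L[ℝ] F} {ε δ : ℝ} {a : E}

def approxSet (f : E → F) (G : Set E) (A : V →L[ℝ] F) (ε δ : ℝ) : Set E :=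
  {a | ball a δ ⊆ G ∧ ∀ v : V, ‖v‖ < δ → ‖f (a + v) - f a - A v‖ ≤ ε * ‖v‖}

lemma isClosed_approxSet (hf : ContinuousOn f G) : IsClosed (approxSet f G A ε δ) := by
  refine isClosed_of_closure_subset fun a ha => ?_
  have hball : ball a δ ⊆ G :=
    (isClosed_setOf_ball_subset G δ).closure_subset_iff.2 (fun x hx => hx.1) ha
  have hcont : ∀ y ∈ ball a δ, ContinuousAt f y := fun y hy =>
    hf.continuousAt (Filter.mem_of_superset (isOpen_ball.mem_nhds hy) hball)
  refine ⟨hball, fun v hv => ?_⟩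
  have hcont_shift : ContinuousAt (fun x => f (x + v)) a :=
    (hcont _ (by simpa using hv)).comp (continuousAt_id.add continuousAt_const)
  have hcont_a : ContinuousAt f a := hcont a (mem_ball_self ((norm_nonneg v).trans_lt hv))
  exact ((hcont_shift.sub hcont_a).sub continuousAt_const).norm.continuousWithinAt.closure_le ha
    continuousWithinAt_const fun x hx => hx.2 v hv

lemma exists_forall_mem_approxSet (hG : G ∈ 𝓝 a) {D : V →L[ℝ] F}
    (hD : HasFDerivAt (fun v : V => f (a + v)) D 0) (hA : ‖A - D‖ < ε) :
    ∃ δ₀ > 0, ∀ δ ≤ δ₀, a ∈ approxSet f G A ε δ := by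
  obtain ⟨r, hr, hlittleO⟩ := Metric.eventually_nhds_iff.1 (hD.isLittleO.def (sub_pos.2 hA))
  obtain ⟨s, hs, hsG⟩ := Metric.mem_nhds_iff.1 hG
  refine ⟨min r s, lt_min hr hs, fun δ hδ =>
    ⟨(ball_subset_ball (hδ.trans (min_le_right _ _))).trans hsG, fun v hv => ?_⟩⟩
  have hv_r : dist v 0 < r := by
    rw [dist_zero_right]; exact hv.trans_le (hδ.trans (min_le_left _ _))
  have hD_est : ‖f (a + v) - f a - D v‖ ≤ (ε - ‖A - D‖) * ‖v‖ := by
    simpa using hlittleO hv_r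
  calc ‖f (a + v) - f a - A v‖ ≤ ‖f (a + v) - f a - D v‖ + ‖D - A‖ * ‖v‖ :=
        ContinuousLinearMap.norm_sub_apply_le _ _ _ _
    _ ≤ ε * ‖v‖ := by rw [norm_sub_rev D A]; linarith

lemma exists_estimate_of_mem_interior_approxSet (h : a ∈ interior (approxSet f G A ε δ))
    (hδ : 0 < δ) : ∃ ρ > 0, ∀ (x : E) (v : V), x ∈ ball a ρ → x + v ∈ ball a ρ →
      ‖f (x + v) - f x - A v‖ ≤ ε * ‖v‖ := by
  obtain ⟨ρ, hρ, hsub⟩ := Metric.mem_nhds_iff.1 (mem_interior_iff_mem_nhds.1 h)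
  refine ⟨min ρ (δ / 2), lt_min hρ (half_pos hδ), fun x v hx hxv => ?_⟩
  have hx_mem : x ∈ approxSet f G A ε δ := hsub (ball_subset_ball (min_le_left _ _) hx)
  refine hx_mem.2 v ?_
  have hx' : dist x a < δ / 2 := hx.trans_le (min_le_right _ _)
  have hxv' : dist (x + v) a < δ / 2 := hxv.trans_le (min_le_right _ _)
  calc ‖v‖ = dist (x + v) x := by rw [dist_eq_norm, add_sub_cancel_left, Submodule.coe_norm]
    _ ≤ dist (x + v) a + dist x a := dist_triangle_right _ _ _
    _ < δ := by linarith

lemma exists_mem_frontier_approxSet {L : ℕ → V →L[ℝ] F} (hL : DenseRange L) (hG : G ∈ 𝓝 a)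
    (hd : FrechetDiffAlong f V a) (hns : ¬ StrictDiffAlong f V a) :
    ∃ m k n : ℕ, a ∈ frontier (approxSet f G (L k) (1 / (m + 1)) (1 / (n + 1))) := by
  set D := derivAlong f V a
  obtain ⟨ε₀, hε₀, hbad⟩ : ∃ ε₀ > (0 : ℝ), ∀ ρ > (0 : ℝ), ∃ (x : E) (v : V),
      x ∈ ball a ρ ∧ x + v ∈ ball a ρ ∧ ε₀ * ‖v‖ < ‖f (x + v) - f x - D v‖ := by
    simpa [StrictDiffAlong, hd, Submodule.coe_norm] using hns
  obtain ⟨m, hm⟩ := exists_nat_one_div_lt (half_pos hε₀)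
  set ε : ℝ := 1 / (m + 1)
  obtain ⟨k, hk⟩ := hL.exists_dist_lt D (Nat.one_div_pos_of_nat : 0 < ε)
  have hkD : ‖L k - D‖ < ε := by rwa [← dist_eq_norm (L k) D, dist_comm]
  obtain ⟨δ₀, hδ₀, hmem⟩ := exists_forall_mem_approxSet hG hd.hasFDerivAt hkD
  obtain ⟨n, hn⟩ := exists_nat_one_div_lt hδ₀
  refine ⟨m, k, n, subset_closure (hmem _ hn.le), fun hint => ?_⟩
  obtain ⟨ρ, hρ, hest⟩ := exists_estimate_of_mem_interior_approxSet hint Nat.one_div_pos_of_nat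
  obtain ⟨x, v, hx, hxv, hlt⟩ := hbad ρ hρ
  have hclose : ‖f (x + v) - f x - D v‖ ≤ ε * ‖v‖ + ε * ‖v‖ :=
    calc ‖f (x + v) - f x - D v‖ ≤ ‖f (x + v) - f x - L k v‖ + ‖L k - D‖ * ‖v‖ :=
          ContinuousLinearMap.norm_sub_apply_le _ _ _ _
      _ ≤ ε * ‖v‖ + ε * ‖v‖ := add_le_add (hest x v hx hxv) (by gcongr)
  have h2ε : ε + ε ≤ ε₀ := by linarith
  linarith [mul_le_mul_of_nonneg_right h2ε (norm_nonneg v)]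

end ApproxSet

theorem meagre_frechetAlong_not_strictAlong_general
    (V : Submodule ℝ X)
    [TopologicalSpace.SeparableSpace (V →L[ℝ] Y)]
    (G : Set X) (hG : IsOpen G) (f : X → Y) (hf : ContinuousOn f G) :
    IsMeagre {a ∈ G | FrechetDiffAlong f V a ∧ ¬ StrictDiffAlong f V a} := by
  obtain ⟨L, hL⟩ := TopologicalSpace.exists_dense_seq (V →L[ℝ] Y)
  have hfrontier : IsMeagre (⋃ (m : ℕ) (k : ℕ) (n : ℕ),
      frontier (approxSet f G (L k) (1 / (m + 1)) (1 / (n + 1)))) :=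
    isMeagre_iUnion fun _ => isMeagre_iUnion fun _ => isMeagre_iUnion fun _ =>
      (isClosed_approxSet hf).isNowhereDense_frontier.isMeagre
  refine hfrontier.mono fun a ⟨haG, hd, hns⟩ => ?_
  obtain ⟨m, k, n, ha⟩ := exists_mem_frontier_approxSet hL (hG.mem_nhds haG) hd hns
  simp only [mem_iUnion]
  exact ⟨m, k, n, ha⟩

theorem meagre_frechetAlong_not_strictAlong
    (V : Submodule ℝ X) (hVclosed : IsClosed (V : Set X))
    [TopologicalSpace.SeparableSpace (V →L[ℝ] Y)]
    (G : Set X) (hG : IsOpen G) (f : X → Y) (hf : ContinuousOn f G) :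
    IsMeagre {a ∈ G | FrechetDiffAlong f V a ∧ ¬ StrictDiffAlong f V a} :=
  meagre_frechetAlong_not_strictAlong_general V G hG f hf
end

section
/- Let X₁, X₂ and Y be Banach spaces, X := X₁ × X₂ with the maximum norm, G ⊆ X an open set, and f : G → Y a continuous mapping such that the space L(X₁, Y) of continuous linear maps is separable. Then there exists a meager set A ⊆ G such that for all x ∈ G \ A, if both partial Fréchet derivatives of f exist at x, then f is Fréchet differentiable at x. -/
open Metric Set Topology Filter Asymptotics

/-!
Fix a countable dense set `D ⊆ L(X₁, Y)`. For `K ∈ D` and scales `ε, δ`, let `S(K, ε, δ)` be the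
set of `x ∈ G` with `‖f (x₁ + h, x₂) - f x - K h‖ ≤ ε ‖h‖` whenever `‖h‖ ≤ δ`. Continuity of `f`
makes `S(K, ε, δ)` relatively closed in `G`, so `S \ interior S` is nowhere dense, and the
exceptional set is the countable union of these over `K ∈ D`, `ε = 1/(p+1)`, `δ = 1/(q+1)`.
Off it, a point with first partial derivative `T₁` lies in some `S(K, ε, δ)` with `K` close to
`T₁`, hence in its interior: the first-variable estimate then holds uniformly at the nearby
points `(x₁, x₂ + k)`, and adding the second partial increment at `x` gives the Fréchet
derivative `T₁.coprod T₂`.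
-/

theorem IsLocallyClosed.isNowhereDense_diff_interior {X : Type*} [TopologicalSpace X]
    {s : Set X} (hs : IsLocallyClosed s) : IsNowhereDense (s \ interior s) := by
  obtain ⟨U, Z, hU, hZ, rfl⟩ := hs
  refine (isClosed_frontier.isNowhereDense_iff.2
    (interior_frontier (isClosed_closure (s := U ∩ Z)))).mono ?_
  rintro x ⟨hxs, hxi⟩
  rw [frontier, closure_closure]
  refine ⟨subset_closure hxs, fun hxc => hxi ?_⟩
  have hsub : interior (closure (U ∩ Z)) ∩ U ⊆ U ∩ Z := fun y hy =>
    ⟨hy.2, closure_minimal inter_subset_right hZ (interior_subset hy.1)⟩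
  exact interior_maximal hsub (isOpen_interior.inter hU) ⟨hxc, hxs.1⟩

section

variable {𝕜 X₁ X₂ Y : Type*} [NontriviallyNormedField 𝕜]
  [NormedAddCommGroup X₁] [NormedSpace 𝕜 X₁] [NormedAddCommGroup Y] [NormedSpace 𝕜 Y]
  {G : Set (X₁ × X₂)} {f : X₁ × X₂ → Y} {K : X₁ →L[𝕜] Y} {ε δ : ℝ} {x : X₁ × X₂}

def firstPartialApproxSet (G : Set (X₁ × X₂)) (f : X₁ × X₂ → Y) (K : X₁ →L[𝕜] Y) (ε δ : ℝ) :
    Set (X₁ × X₂) :=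
  {x | x ∈ G ∧ ∀ h : X₁, ‖h‖ ≤ δ → (x.1 + h, x.2) ∈ G → ‖f (x.1 + h, x.2) - f x - K h‖ ≤ ε * ‖h‖}

theorem exists_nat_mem_firstPartialApproxSet {T₁ : X₁ →L[𝕜] Y} (hxG : x ∈ G)
    (h₁ : HasFDerivAt (fun t => f (t, x.2)) T₁ x.1) (hK : ‖K - T₁‖ < ε) :
    ∃ q : ℕ, x ∈ firstPartialApproxSet G f K ε (1 / (q + 1)) := by
  obtain ⟨r, hr, hbound⟩ := Metric.eventually_nhds_iff.1 <|
    (hasFDerivAt_iff_isLittleO_nhds_zero.1 h₁).bound (sub_pos.2 hK)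
  obtain ⟨q, hq⟩ := exists_nat_one_div_lt hr
  refine ⟨q, hxG, fun h hh _ => ?_⟩
  have hfirst : ‖f (x.1 + h, x.2) - f x - T₁ h‖ ≤ (ε - ‖K - T₁‖) * ‖h‖ := by
    simpa using hbound (y := h) (by simpa using hh.trans_lt hq)
  calc ‖f (x.1 + h, x.2) - f x - K h‖
      = ‖(f (x.1 + h, x.2) - f x - T₁ h) - (K - T₁) h‖ := by simp
    _ ≤ (ε - ‖K - T₁‖) * ‖h‖ + ‖K - T₁‖ * ‖h‖ := norm_sub_le_of_le hfirst ((K - T₁).le_opNorm h)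
    _ = ε * ‖h‖ := by ring

variable [NormedAddCommGroup X₂]

theorem closure_inter_subset_firstPartialApproxSet (hG : IsOpen G) (hf : ContinuousOn f G) :
    closure (firstPartialApproxSet G f K ε δ) ∩ G ⊆ firstPartialApproxSet G f K ε δ := by
  set S := firstPartialApproxSet G f K ε δ
  rintro x ⟨hxS, hxG⟩
  refine ⟨hxG, fun h hh hxhG => ?_⟩
  have : (𝓝[S] x).NeBot := mem_closure_iff_nhdsWithin_neBot.1 hxS
  have hshift : Continuous fun y : X₁ × X₂ => (y.1 + h, y.2) := by fun_prop
  have hcont : ContinuousAt (fun y : X₁ × X₂ => ‖f (y.1 + h, y.2) - f y - K h‖) x :=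
    ((((hf.continuousAt (hG.mem_nhds hxhG)).comp (f := fun y : X₁ × X₂ => (y.1 + h, y.2))
      hshift.continuousAt).sub (hf.continuousAt (hG.mem_nhds hxG))).sub continuousAt_const).norm
  refine le_of_tendsto (hcont.continuousWithinAt (s := S)) ?_
  have hshiftG : ∀ᶠ y in 𝓝[S] x, (y.1 + h, y.2) ∈ G :=
    nhdsWithin_le_nhds (hshift.continuousAt.preimage_mem_nhds (hG.mem_nhds hxhG))
  filter_upwards [hshiftG, self_mem_nhdsWithin] with y hyG hyS
  exact hyS.2 h hh hyG

theorem isLocallyClosed_firstPartialApproxSet (hG : IsOpen G) (hf : ContinuousOn f G) :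
    IsLocallyClosed (firstPartialApproxSet G f K ε δ) :=
  ⟨G, closure (firstPartialApproxSet G f K ε δ), hG, isClosed_closure,
    subset_antisymm (subset_inter (fun _ hx => hx.1) subset_closure)
      (inter_comm G _ ▸ closure_inter_subset_firstPartialApproxSet hG hf)⟩

def firstPartialExceptionalSet (G : Set (X₁ × X₂)) (f : X₁ × X₂ → Y) (D : Set (X₁ →L[𝕜] Y)) :
    Set (X₁ × X₂) :=
  ⋃ K ∈ D, ⋃ (p : ℕ) (q : ℕ),
    firstPartialApproxSet G f K (1 / (p + 1)) (1 / (q + 1)) \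
      interior (firstPartialApproxSet G f K (1 / (p + 1)) (1 / (q + 1)))

theorem firstPartialExceptionalSet_subset (D : Set (X₁ →L[𝕜] Y)) :
    firstPartialExceptionalSet G f D ⊆ G := by
  simp only [firstPartialExceptionalSet, iUnion_subset_iff]
  exact fun _ _ _ _ x hx => hx.1.1

theorem isMeagre_firstPartialExceptionalSet (hG : IsOpen G) (hf : ContinuousOn f G)
    {D : Set (X₁ →L[𝕜] Y)} (hD : D.Countable) : IsMeagre (firstPartialExceptionalSet G f D) :=
  isMeagre_biUnion hD fun _ _ => isMeagre_iUnion fun _ => isMeagre_iUnion fun _ =>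
    (isLocallyClosed_firstPartialApproxSet hG hf).isNowhereDense_diff_interior.isMeagre

theorem mem_interior_firstPartialApproxSet_of_notMem {D : Set (X₁ →L[𝕜] Y)} {p q : ℕ}
    (hKD : K ∈ D) (hxA : x ∉ firstPartialExceptionalSet G f D)
    (hx : x ∈ firstPartialApproxSet G f K (1 / (p + 1)) (1 / (q + 1))) :
    x ∈ interior (firstPartialApproxSet G f K (1 / (p + 1)) (1 / (q + 1))) := by
  by_contra hxi
  exact hxA (mem_biUnion hKD (mem_iUnion_of_mem p (mem_iUnion_of_mem q ⟨hx, hxi⟩)))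

variable [NormedSpace 𝕜 X₂]

theorem eventually_norm_sub_coprod_le_of_mem_interior (hG : IsOpen G)
    (hx : x ∈ interior (firstPartialApproxSet G f K ε δ)) (hε : 0 ≤ ε) (hδ : 0 < δ)
    {T₁ : X₁ →L[𝕜] Y} {η : ℝ} (hK : ‖K - T₁‖ ≤ η) {T₂ : X₂ →L[𝕜] Y}
    (h₂ : HasFDerivAt (fun t => f (x.1, t)) T₂ x.2) {c : ℝ} (hc : 0 < c) :
    ∀ᶠ h in 𝓝 0, ‖f (x + h) - f x - T₁.coprod T₂ h‖ ≤ (ε + η + c) * ‖h‖ := by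
  have hxG : x ∈ G := (interior_subset hx).1
  have h0 : Tendsto (fun h : X₁ × X₂ => x + h) (𝓝 0) (𝓝 x) := by
    simpa using (continuous_const_add x).tendsto 0
  have hS : ∀ᶠ h : X₁ × X₂ in 𝓝 0, (x.1, x.2 + h.2) ∈ firstPartialApproxSet G f K ε δ := by
    have : Tendsto (fun h : X₁ × X₂ => (x.1, x.2 + h.2)) (𝓝 0) (𝓝 x) := by
      have : Continuous fun h : X₁ × X₂ => (x.1, x.2 + h.2) := by fun_prop
      simpa using this.tendsto 0
    exact this.eventually (mem_interior_iff_mem_nhds.1 hx)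
  have hsmall : ∀ᶠ h : X₁ × X₂ in 𝓝 0, ‖h.1‖ ≤ δ :=
    (continuous_fst.norm.tendsto' 0 0 (by simp)).eventually (eventually_le_nhds hδ)
  have hsecond : ∀ᶠ h : X₁ × X₂ in 𝓝 0, ‖f (x.1, x.2 + h.2) - f x - T₂ h.2‖ ≤ c * ‖h.2‖ := by
    simpa using (continuous_snd.tendsto' 0 0 rfl).eventually
      ((hasFDerivAt_iff_isLittleO_nhds_zero.1 h₂).bound hc)
  filter_upwards [hS, h0.eventually (hG.mem_nhds hxG), hsmall, hsecond]
    with h hhS hhG hh₁ hh₂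
  have hfirst : ‖f (x + h) - f (x.1, x.2 + h.2) - K h.1‖ ≤ ε * ‖h.1‖ := hhS.2 h.1 hh₁ hhG
  calc ‖f (x + h) - f x - T₁.coprod T₂ h‖
      = ‖(f (x + h) - f (x.1, x.2 + h.2) - K h.1) + (K - T₁) h.1
          + (f (x.1, x.2 + h.2) - f x - T₂ h.2)‖ := by
        congr 1; simp only [ContinuousLinearMap.coprod_apply, sub_apply]; abel
    _ ≤ ε * ‖h.1‖ + η * ‖h.1‖ + c * ‖h.2‖ :=
        norm_add₃_le.trans (add_le_add_three hfirst
          (((K - T₁).le_opNorm h.1).trans (by gcongr)) hh₂)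
    _ ≤ ε * ‖h‖ + η * ‖h‖ + c * ‖h‖ := by
        have hη : 0 ≤ η := (norm_nonneg _).trans hK
        gcongr <;> first | exact norm_fst_le h | exact norm_snd_le h
    _ = (ε + η + c) * ‖h‖ := by ring

end

theorem meagre_exceptional_set_partial_frechet_continuous_general
    {X₁ X₂ Y : Type*} [NormedAddCommGroup X₁] [NormedSpace ℝ X₁]
    [NormedAddCommGroup X₂] [NormedSpace ℝ X₂]
    [NormedAddCommGroup Y] [NormedSpace ℝ Y]
    [TopologicalSpace.SeparableSpace (X₁ →L[ℝ] Y)]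
    (G : Set (X₁ × X₂)) (hG : IsOpen G) (f : X₁ × X₂ → Y) (hf : ContinuousOn f G) :
    ∃ A : Set (X₁ × X₂), A ⊆ G ∧ IsMeagre A ∧
      ∀ x ∈ G \ A,
        (DifferentiableAt ℝ (fun t : X₁ => f (t, x.2)) x.1 ∧
         DifferentiableAt ℝ (fun t : X₂ => f (x.1, t)) x.2) →
        DifferentiableAt ℝ f x := by
  obtain ⟨D, hDc, hDd⟩ := TopologicalSpace.exists_countable_dense (X₁ →L[ℝ] Y)
  refine ⟨firstPartialExceptionalSet G f D, firstPartialExceptionalSet_subset D,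
    isMeagre_firstPartialExceptionalSet hG hf hDc, ?_⟩
  rintro x ⟨hxG, hxA⟩ ⟨h₁, h₂⟩
  set T₁ := fderiv ℝ (fun t => f (t, x.2)) x.1
  refine ⟨T₁.coprod (fderiv ℝ (fun t => f (x.1, t)) x.2),
    hasFDerivAt_iff_isLittleO_nhds_zero.2 <| isLittleO_iff.2 fun c hc => ?_⟩
  obtain ⟨p, hp⟩ := exists_nat_one_div_lt (by positivity : 0 < c / 3)
  obtain ⟨K, hKD, hK⟩ := hDd.exists_dist_lt T₁ (by positivity : (0 : ℝ) < 1 / (p + 1))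
  rw [dist_comm, dist_eq_norm] at hK
  obtain ⟨q, hxS⟩ := exists_nat_mem_firstPartialApproxSet hxG h₁.hasFDerivAt hK
  have hxS' := mem_interior_firstPartialApproxSet_of_notMem hKD hxA hxS
  filter_upwards [eventually_norm_sub_coprod_le_of_mem_interior hG hxS' (by positivity)
    (by positivity) hK.le h₂.hasFDerivAt (by positivity : 0 < c / 3)] with h hh
  exact hh.trans (by gcongr; linarith)

theorem meagre_exceptional_set_partial_frechet_continuous
    {X₁ X₂ Y : Type*} [NormedAddCommGroup X₁] [NormedSpace ℝ X₁] [CompleteSpace X₁]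
    [NormedAddCommGroup X₂] [NormedSpace ℝ X₂] [CompleteSpace X₂]
    [NormedAddCommGroup Y] [NormedSpace ℝ Y] [CompleteSpace Y]
    [TopologicalSpace.SeparableSpace (X₁ →L[ℝ] Y)]
    (G : Set (X₁ × X₂)) (hG : IsOpen G) (f : X₁ × X₂ → Y) (hf : ContinuousOn f G) :
    ∃ A : Set (X₁ × X₂), A ⊆ G ∧ IsMeagre A ∧
      ∀ x ∈ G \ A,
        (DifferentiableAt ℝ (fun t : X₁ => f (t, x.2)) x.1 ∧
         DifferentiableAt ℝ (fun t : X₂ => f (x.1, t)) x.2) →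
        DifferentiableAt ℝ f x :=
  meagre_exceptional_set_partial_frechet_continuous_general G hG f hf
end

section
/- Let X₁, X₂ and Y be Banach spaces, X := X₁ × X₂, G ⊆ X an open set, a ∈ G, and f : G → Y. Suppose f has a partial Fréchet derivative at a with respect to the second variable and f is strictly partially differentiable at a with respect to the first variable. Then f is Fréchet differentiable at a. -/
open Metric Set Topology

theorem frechet_of_strict_partial_first_and_partial_second
    {X₁ X₂ Y : Type*} [NormedAddCommGroup X₁] [NormedSpace ℝ X₁] [CompleteSpace X₁]
    [NormedAddCommGroup X₂] [NormedSpace ℝ X₂] [CompleteSpace X₂]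
    [NormedAddCommGroup Y] [NormedSpace ℝ Y] [CompleteSpace Y]
    (G : Set (X₁ × X₂)) (hG : IsOpen G) (a : X₁ × X₂) (ha : a ∈ G)
    (f : X₁ × X₂ → Y)
    (h₂ : DifferentiableAt ℝ (fun t : X₂ => f (a.1, t)) a.2)
    (h₁strict : ∃ T : X₁ →L[ℝ] Y, ∀ ε > (0 : ℝ), ∃ δ > (0 : ℝ),
      ∀ (x : X₁ × X₂) (v : X₁), x ∈ ball a δ → x + (v, 0) ∈ ball a δ →
        ‖f (x + (v, 0)) - f x - T v‖ ≤ ε * ‖v‖) :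
    DifferentiableAt ℝ f a := by
  obtain ⟨T, hT⟩ := h₁strict
  set S := fderiv ℝ (fun t : X₂ => f (a.1, t)) a.2 with hSdef
  have hS : HasFDerivAt (fun t : X₂ => f (a.1, t)) S a.2 := h₂.hasFDerivAt
  refine (HasFDerivAt.differentiableAt (f' := T.coprod S) ?_)
  rw [hasFDerivAt_iff_isLittleO_nhds_zero, Asymptotics.isLittleO_iff]
  intro c hc
  have hc2 : (0:ℝ) < c / 2 := by linarith
  obtain ⟨δ₁, hδ₁, hT1⟩ := hT (c/2) hc2
  have hS' : ∀ᶠ w in 𝓝 (0 : X₂),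
      ‖f (a.1, a.2 + w) - f (a.1, a.2) - S w‖ ≤ c/2 * ‖w‖ := by
    have := (hasFDerivAt_iff_isLittleO_nhds_zero.mp hS)
    exact (Asymptotics.isLittleO_iff.mp this) hc2
  obtain ⟨δ₂, hδ₂, hS2⟩ := Metric.eventually_nhds_iff.mp hS'
  rw [Metric.eventually_nhds_iff]
  refine ⟨min δ₁ δ₂, lt_min hδ₁ hδ₂, ?_⟩
  intro h hh
  rw [dist_zero_right] at hh
  have hh1 : ‖h‖ < δ₁ := lt_of_lt_of_le hh (min_le_left _ _)
  have hh2 : ‖h‖ < δ₂ := lt_of_lt_of_le hh (min_le_right _ _)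
  have hn1 : ‖h.1‖ ≤ ‖h‖ := norm_fst_le h
  have hn2 : ‖h.2‖ ≤ ‖h‖ := norm_snd_le h
  -- apply strict partial differentiability with x = a + (0, h.2), v = h.1
  have hx : a + ((0:X₁), h.2) ∈ ball a δ₁ := by
    rw [mem_ball_iff_norm, add_sub_cancel_left]
    calc ‖((0:X₁), h.2)‖ = max ‖(0:X₁)‖ ‖h.2‖ := rfl
      _ = ‖h.2‖ := by simp
      _ < δ₁ := lt_of_le_of_lt hn2 hh1
  have hx' : a + ((0:X₁), h.2) + (h.1, (0:X₂)) ∈ ball a δ₁ := by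
    have : a + ((0:X₁), h.2) + (h.1, (0:X₂)) = a + h := by
      ext <;> simp
    rw [this, mem_ball_iff_norm, add_sub_cancel_left]
    exact hh1
  have hA := hT1 (a + ((0:X₁), h.2)) h.1 hx hx'
  have heq : a + ((0:X₁), h.2) + (h.1, (0:X₂)) = a + h := by ext <;> simp
  rw [heq] at hA
  have heq2 : a + ((0:X₁), h.2) = (a.1, a.2 + h.2) := by ext <;> simp
  rw [heq2] at hA
  have hB := hS2 (y := h.2) (by rw [dist_zero_right]; exact lt_of_le_of_lt hn2 hh2)
  have hfa : f a = f (a.1, a.2) := by rw [Prod.mk.eta]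
  have key : f (a + h) - f a - (T.coprod S) h
      = (f (a + h) - f (a.1, a.2 + h.2) - T h.1)
        + (f (a.1, a.2 + h.2) - f (a.1, a.2) - S h.2) := by
    rw [hfa]
    simp [ContinuousLinearMap.coprod_apply]
    abel
  rw [key]
  calc ‖_ + _‖ ≤ ‖f (a + h) - f (a.1, a.2 + h.2) - T h.1‖
        + ‖f (a.1, a.2 + h.2) - f (a.1, a.2) - S h.2‖ := norm_add_le _ _
    _ ≤ c/2 * ‖h.1‖ + c/2 * ‖h.2‖ := add_le_add hA hB
    _ ≤ c/2 * ‖h‖ + c/2 * ‖h‖ := by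
        have := hc2.le
        gcongr
    _ = c * ‖h‖ := by ring
end

section
/- Let X₁,…,Xₙ and Y be Banach spaces, X := X₁ × ⋯ × Xₙ, G ⊆ X open, a ∈ G, and f : G → Y. If f is partially Fréchet differentiable at a with respect to the n-th variable and strictly partially differentiable at a with respect to the j-th variable for each 1 ≤ j ≤ n−1, then f is Fréchet differentiable at a. -/
open Metric Set Topology

theorem frechet_of_strict_partials_and_last_partial
    {n : ℕ} {X : Fin (n + 1) → Type*} {Y : Type*}
    [∀ i, NormedAddCommGroup (X i)] [∀ i, NormedSpace ℝ (X i)] [∀ i, CompleteSpace (X i)]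
    [NormedAddCommGroup Y] [NormedSpace ℝ Y] [CompleteSpace Y]
    (G : Set (∀ i, X i)) (hG : IsOpen G) (a : ∀ i, X i) (ha : a ∈ G)
    (f : (∀ i, X i) → Y)
    (hlast : DifferentiableAt ℝ
      (fun t : X (Fin.last n) => f (Function.update a (Fin.last n) t)) (a (Fin.last n)))
    (hstrict : ∀ j : Fin (n + 1), j ≠ Fin.last n →
      ∃ T : X j →L[ℝ] Y, ∀ ε > (0 : ℝ), ∃ δ > (0 : ℝ),
        ∀ (x : ∀ i, X i) (v : X j), x ∈ ball a δ → x + Pi.single j v ∈ ball a δ →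
          ‖f (x + Pi.single j v) - f x - T v‖ ≤ ε * ‖v‖) :
    DifferentiableAt ℝ f a := by
  classical
  -- derivative of the last partial map
  set φ : X (Fin.last n) → Y := fun t => f (Function.update a (Fin.last n) t) with hφdef
  set Tn : X (Fin.last n) →L[ℝ] Y := fderiv ℝ φ (a (Fin.last n)) with hTndef
  have hTn : HasFDerivAt φ Tn (a (Fin.last n)) := hlast.hasFDerivAt
  -- derivatives of the other partial maps
  choose Ts hTs using fun k : Fin n => hstrict k.castSucc (Fin.castSucc_lt_last k).ne
  set T : ∀ j : Fin (n+1), X j →L[ℝ] Y := Fin.lastCases Tn Ts with hTdef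
  set L : (∀ i, X i) →L[ℝ] Y := ∑ j, (T j).comp (ContinuousLinearMap.proj j) with hLdef
  have hLapp : ∀ h : ∀ i, X i, L h =
      (∑ k : Fin n, Ts k (h k.castSucc)) + Tn (h (Fin.last n)) := by
    intro h
    rw [hLdef, ContinuousLinearMap.sum_apply]
    simp only [ContinuousLinearMap.comp_apply, ContinuousLinearMap.proj_apply]
    rw [Fin.sum_univ_castSucc]
    congr 1
    · exact Finset.sum_congr rfl fun k _ => by simp only [hTdef, Fin.lastCases_castSucc]
    · simp only [hTdef, Fin.lastCases_last]
  suffices hF : HasFDerivAt f L a from hF.differentiableAt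
  rw [hasFDerivAt_iff_isLittleO_nhds_zero] at hTn ⊢
  rw [Asymptotics.isLittleO_iff] at hTn ⊢
  intro c hc
  have hnpos : (0:ℝ) < n + 1 := by positivity
  set ε : ℝ := c / (n+1) with hεdef
  have hεpos : 0 < ε := div_pos hc hnpos
  -- δ for the strict coordinates
  choose δs hδspos hδs using fun k : Fin n => hTs k ε hεpos
  obtain ⟨δ2, hδ2pos, hδ2⟩ : ∃ δ2 > (0:ℝ), ∀ k : Fin n, δ2 ≤ δs k := by
    rcases isEmpty_or_nonempty (Fin n) with hE | hE
    · exact ⟨1, one_pos, fun k => hE.elim k⟩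
    · refine ⟨Finset.univ.inf' Finset.univ_nonempty δs, ?_,
        fun k => Finset.inf'_le _ (Finset.mem_univ k)⟩
      exact (Finset.lt_inf'_iff _).mpr fun k _ => hδspos k
  -- δ for the last coordinate
  obtain ⟨δl, hδlpos, hlastE⟩ := Metric.eventually_nhds_iff.mp (hTn hεpos)
  set δ : ℝ := min δ2 δl with hδdef
  have hδpos : 0 < δ := lt_min hδ2pos hδlpos
  filter_upwards [Metric.ball_mem_nhds (0 : ∀ i, X i) hδpos] with h hmem
  have hxnorm : ‖h‖ < δ := by rwa [mem_ball_iff_norm, sub_zero] at hmem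
  set x : ∀ i, X i := a + h with hxdef
  -- the chain of intermediate points
  set g : ℕ → (∀ i, X i) := fun m i => if (i:ℕ) < m ∨ i = Fin.last n then x i else a i
    with hgdef
  have hg0 : g 0 = Function.update a (Fin.last n) (x (Fin.last n)) := by
    funext i
    rcases eq_or_ne i (Fin.last n) with rfl | hi
    · simp [hgdef]
    · simp [hgdef, hi, Function.update_of_ne hi]
  have hgn : g n = x := by
    funext i
    rcases eq_or_ne i (Fin.last n) with rfl | hi
    · simp [hgdef]
    · have hiv : (i:ℕ) < n := by
        have h1 := i.isLt
        have h2 : (i:ℕ) ≠ n := fun h' => hi (Fin.ext h')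
        omega
      simp [hgdef, hiv]
  have hgstep : ∀ k : Fin n,
      g ((k:ℕ)+1) = g (k:ℕ) + Pi.single k.castSucc (h k.castSucc) := by
    intro k
    funext i
    rcases eq_or_ne i k.castSucc with rfl | hi
    · have h1 : ((k.castSucc : Fin (n+1)) : ℕ) < (k:ℕ) + 1 := by simp
      have h2 : ¬ (((k.castSucc : Fin (n+1)) : ℕ) < (k:ℕ)) := by simp
      have h3 : (k.castSucc : Fin (n+1)) ≠ Fin.last n := (Fin.castSucc_lt_last k).ne
      simp only [hgdef, Pi.add_apply, Pi.single_eq_same]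
      rw [if_pos (Or.inl h1), if_neg (by simp [h2, h3]), hxdef]
      simp [add_comm]
    · have hne : (i:ℕ) ≠ (k:ℕ) := fun h' => hi (Fin.ext (by simpa using h'))
      have hiv : ((i:ℕ) < (k:ℕ) + 1 ∨ i = Fin.last n) ↔ ((i:ℕ) < (k:ℕ) ∨ i = Fin.last n) := by
        constructor <;> rintro (h' | h')
        · exact Or.inl (by omega)
        · exact Or.inr h'
        · exact Or.inl (by omega)
        · exact Or.inr h'
      simp only [hgdef, Pi.add_apply, Pi.single_eq_of_ne hi, add_zero]
      by_cases hcond : (i:ℕ) < (k:ℕ) ∨ i = Fin.last n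
      · rw [if_pos (hiv.mpr hcond), if_pos hcond]
      · rw [if_neg (fun h' => hcond (hiv.mp h')), if_neg hcond]
  have hgnear : ∀ m : ℕ, ‖g m - a‖ ≤ ‖h‖ := by
    intro m
    refine (pi_norm_le_iff_of_nonneg (norm_nonneg h)).mpr fun i => ?_
    simp only [Pi.sub_apply, hgdef]
    by_cases hcond : (i:ℕ) < m ∨ i = Fin.last n
    · rw [if_pos hcond, hxdef]
      simpa using norm_le_pi_norm h i
    · rw [if_neg hcond]
      simp
  -- estimate for each strict step
  have hstep : ∀ k : Fin n,
      ‖f (g ((k:ℕ)+1)) - f (g (k:ℕ)) - Ts k (h k.castSucc)‖ ≤ ε * ‖h‖ := by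
    intro k
    have hδk : ‖h‖ < δs k := lt_of_lt_of_le hxnorm ((min_le_left _ _).trans (hδ2 k))
    have h1 : g (k:ℕ) ∈ ball a (δs k) := by
      rw [mem_ball_iff_norm]
      exact lt_of_le_of_lt (hgnear _) hδk
    have h2 : g (k:ℕ) + Pi.single k.castSucc (h k.castSucc) ∈ ball a (δs k) := by
      rw [← hgstep k, mem_ball_iff_norm]
      exact lt_of_le_of_lt (hgnear _) hδk
    have hb := hδs k (g (k:ℕ)) (h k.castSucc) h1 h2
    rw [← hgstep k] at hb
    exact hb.trans (mul_le_mul_of_nonneg_left (norm_le_pi_norm h _) hεpos.le)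
  -- estimate for the last coordinate step
  have hlaststep : ‖f (g 0) - f a - Tn (h (Fin.last n))‖ ≤ ε * ‖h‖ := by
    have hd : dist (h (Fin.last n)) 0 < δl := by
      rw [dist_zero_right]
      exact lt_of_le_of_lt (norm_le_pi_norm h _) (hxnorm.trans_le (min_le_right _ _))
    have hb := hlastE hd
    simp only [hφdef] at hb
    have e1 : Function.update a (Fin.last n) (a (Fin.last n) + h (Fin.last n)) = g 0 := by
      rw [hg0]; congr 1
    have e3 : f (Function.update a (Fin.last n) (a (Fin.last n))) = f a := by
      rw [Function.update_eq_self]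
    rw [e1, e3] at hb
    exact hb.trans (mul_le_mul_of_nonneg_left (norm_le_pi_norm h _) hεpos.le)
  -- assemble
  have hsum : f (a + h) - f a - L h =
      (∑ k : Fin n, (f (g ((k:ℕ)+1)) - f (g (k:ℕ)) - Ts k (h k.castSucc))) +
        (f (g 0) - f a - Tn (h (Fin.last n))) := by
    have htel : ∑ k : Fin n, (f (g ((k:ℕ)+1)) - f (g (k:ℕ))) = f (g n) - f (g 0) := by
      rw [Fin.sum_univ_eq_sum_range (fun m => f (g (m+1)) - f (g m)) n]
      exact Finset.sum_range_sub (fun m => f (g m)) n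
    rw [Finset.sum_sub_distrib, htel, hgn, hLapp h, ← hxdef]
    abel
  calc ‖f (a + h) - f a - L h‖
      ≤ ‖∑ k : Fin n, (f (g ((k:ℕ)+1)) - f (g (k:ℕ)) - Ts k (h k.castSucc))‖ +
        ‖f (g 0) - f a - Tn (h (Fin.last n))‖ := by rw [hsum]; exact norm_add_le _ _
    _ ≤ (∑ k : Fin n, ε * ‖h‖) + ε * ‖h‖ := by
        exact add_le_add ((norm_sum_le _ _).trans (Finset.sum_le_sum fun k _ => hstep k))
          hlaststep
    _ = (n + 1) * (ε * ‖h‖) := by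
        rw [Finset.sum_const, Finset.card_univ, Fintype.card_fin, nsmul_eq_mul]
        push_cast
        ring
    _ = c * ‖h‖ := by
        rw [hεdef]; field_simp
end

section
/- Let X₁, X₂, Y be Banach spaces, X := X₁ × X₂, and f : X → Y a mapping which is continuous with respect to the second variable (every partial map f(a₁,·) is continuous on X₂). Then the set D₁(f) of points x ∈ X at which the partial Fréchet derivative of f with respect to the first variable exists is an F_{σδ} set. -/
open Metric Set Topology

/-- An `Fσ` set: a countable union of closed sets. -/
def IsFSigma {Z : Type*} [TopologicalSpace Z] (s : Set Z) : Prop :=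
  ∃ u : ℕ → Set Z, (∀ n, IsClosed (u n)) ∧ s = ⋃ n, u n

/-- An `Fσδ` set: a countable intersection of `Fσ` sets. -/
def IsFSigmaDelta {Z : Type*} [TopologicalSpace Z] (s : Set Z) : Prop :=
  ∃ u : ℕ → Set Z, (∀ n, IsFSigma (u n)) ∧ s = ⋂ n, u n

/-!
Write `A(M, δ, c)` for the set of points `y` at which some operator `L` with `‖L‖ ≤ M` approximates
`t ↦ f (t, y.2)` at `y.1` up to `c * ‖h‖` for all increments `‖h‖ < δ`; the set of points of
partial differentiability is `⋂ₖ ⋃ₙ closure A(n, 1/(n+1), 1/(k+1))`.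
Continuity in the second variable moves an approximation at a nearby point to a limit point, but
only for finitely many increments at a time, since the operator `L` depends on the nearby point.
Such finite-set approximations already force the difference quotients
`t⁻¹ • (f (x.1 + t • h, x.2) - f x)` to be Cauchy as `t → 0⁺`. Their limit is a pointwise limit
of linear maps, hence linear, it is bounded, and it is the partial derivative.
-/

open Filter Asymptotics

section LinearApprox

variable {E F : Type*} [NormedAddCommGroup E] [NormedSpace ℝ E]
  [NormedAddCommGroup F] [NormedSpace ℝ F]

def IsLinearApproxOn (φ : E → F) (a : E) (L : E →L[ℝ] F) (s : Set E) (c : ℝ) : Prop :=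
  ∀ h ∈ s, ‖φ (a + h) - φ a - L h‖ ≤ c * ‖h‖

def FinitelyApproximable (φ : E → F) (a : E) (M δ c : ℝ) : Prop :=
  ∀ S : Finset E, (S : Set E) ⊆ ball 0 δ →
    ∃ L : E →L[ℝ] F, ‖L‖ ≤ M ∧ IsLinearApproxOn φ a L S c

noncomputable def dirSlope (φ : E → F) (a h : E) (t : ℝ) : F := t⁻¹ • (φ (a + t • h) - φ a)

variable {φ : E → F} {a : E} {L : E →L[ℝ] F} {s : Set E} {M δ c : ℝ}

theorem IsLinearApproxOn.mono {t : Set E} (hL : IsLinearApproxOn φ a L s c) (hts : t ⊆ s) :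
    IsLinearApproxOn φ a L t c :=
  fun h hh => hL h (hts hh)

theorem HasFDerivAt.exists_isLinearApproxOn_ball (hφ : HasFDerivAt φ L a) (hc : 0 < c) :
    ∃ δ > 0, IsLinearApproxOn φ a L (ball 0 δ) c := by
  rw [hasFDerivAt_iff_isLittleO_nhds_zero] at hφ
  obtain ⟨δ, hδ, hball⟩ := eventually_nhds_iff_ball.1 (hφ.def hc)
  exact ⟨δ, hδ, hball⟩

theorem IsLinearApproxOn.norm_sub_le_of_shift (hL : IsLinearApproxOn φ a L (ball 0 δ) c)
    (hc : 0 ≤ c) {e w : E} (he : ‖e‖ < δ) (hew : ‖e + w‖ < δ) :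
    ‖φ (a + e + w) - φ (a + e) - L w‖ ≤ c * ‖w‖ + 2 * c * ‖e‖ := by
  have hew' := hL (e + w) (by simpa using hew)
  have he' := hL e (by simpa using he)
  calc ‖φ (a + e + w) - φ (a + e) - L w‖
      = ‖(φ (a + (e + w)) - φ a - L (e + w)) - (φ (a + e) - φ a - L e)‖ := by
        rw [map_add, add_assoc]; congr 1; abel
    _ ≤ c * ‖e + w‖ + c * ‖e‖ := (norm_sub_le _ _).trans (add_le_add hew' he')
    _ ≤ c * (‖e‖ + ‖w‖) + c * ‖e‖ := by gcongr; exact norm_add_le e w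
    _ = c * ‖w‖ + 2 * c * ‖e‖ := by ring

theorem IsLinearApproxOn.norm_dirSlope_sub_le (hL : IsLinearApproxOn φ a L s c) {t : ℝ}
    (ht : 0 < t) {h : E} (hh : t • h ∈ s) : ‖dirSlope φ a h t - L h‖ ≤ c * ‖h‖ := by
  have hrescale : dirSlope φ a h t - L h = t⁻¹ • (φ (a + t • h) - φ a - L (t • h)) := by
    rw [dirSlope, map_smul, smul_sub _ _ (t • L h), smul_smul, inv_mul_cancel₀ ht.ne', one_smul]
  calc ‖dirSlope φ a h t - L h‖ = t⁻¹ * ‖φ (a + t • h) - φ a - L (t • h)‖ := by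
        rw [hrescale, norm_smul, Real.norm_of_nonneg (inv_nonneg.2 ht.le)]
    _ ≤ t⁻¹ * (c * ‖t • h‖) := by gcongr; exact hL _ hh
    _ = c * ‖h‖ := by
        rw [norm_smul, Real.norm_of_nonneg ht.le]; field_simp

theorem eventually_mul_lt_nhdsGT (b : ℝ) {δ : ℝ} (hδ : 0 < δ) :
    ∀ᶠ t in 𝓝[>] (0 : ℝ), 0 < t ∧ t * b < δ := by
  refine eventually_mem_nhdsWithin.and (Eventually.filter_mono nhdsWithin_le_nhds ?_)
  exact (continuous_mul_const b).tendsto' 0 0 (zero_mul b) |>.eventually (gt_mem_nhds hδ)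

namespace FinitelyApproximable

theorem norm_dirSlope_sub_dirSlope_le (hA : FinitelyApproximable φ a M δ c) {h : E} {s t : ℝ}
    (hs : 0 < s) (ht : 0 < t) (hsh : s * ‖h‖ < δ) (hth : t * ‖h‖ < δ) :
    ‖dirSlope φ a h s - dirSlope φ a h t‖ ≤ 2 * c * ‖h‖ := by
  classical
  obtain ⟨L, -, hL⟩ := hA {s • h, t • h} (by
    intro w hw
    simp only [Finset.coe_insert, Finset.coe_singleton, mem_insert_iff, mem_singleton_iff] at hw
    rcases hw with rfl | rfl <;>
      simpa [norm_smul, abs_of_pos hs, abs_of_pos ht])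
  calc ‖dirSlope φ a h s - dirSlope φ a h t‖
      ≤ ‖dirSlope φ a h s - L h‖ + ‖dirSlope φ a h t - L h‖ := by
        simpa only [dist_eq_norm] using dist_triangle_right _ _ (L h)
    _ ≤ c * ‖h‖ + c * ‖h‖ :=
        add_le_add (hL.norm_dirSlope_sub_le hs (by simp)) (hL.norm_dirSlope_sub_le ht (by simp))
    _ = 2 * c * ‖h‖ := by ring

theorem norm_dirSlope_sub_le_of_tendsto (hA : FinitelyApproximable φ a M δ c) {h : E} {v : F}
    (hv : Tendsto (dirSlope φ a h) (𝓝[>] 0) (𝓝 v)) {t : ℝ} (ht : 0 < t) (hth : t * ‖h‖ < δ) :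
    ‖dirSlope φ a h t - v‖ ≤ 2 * c * ‖h‖ :=
  le_of_tendsto (tendsto_const_nhds.sub hv).norm <|
    (eventually_mul_lt_nhdsGT ‖h‖ ((by positivity : 0 ≤ t * ‖h‖).trans_lt hth)).mono
      fun _ hs => hA.norm_dirSlope_sub_dirSlope_le ht hs.1 hth hs.2

theorem exists_approx_of_tendsto (hA : FinitelyApproximable φ a M δ c) (hδ : 0 < δ) {D : E → F}
    (hD : ∀ h, Tendsto (dirSlope φ a h) (𝓝[>] 0) (𝓝 (D h))) (S : Finset E) :
    ∃ L : E →L[ℝ] F, ‖L‖ ≤ M ∧ ∀ h ∈ S, ‖D h - L h‖ ≤ 3 * c * ‖h‖ := by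
  classical
  obtain ⟨t, ht⟩ := (eventually_mem_nhdsWithin.and (S.eventually_all.2 fun h _ =>
    (eventually_mul_lt_nhdsGT ‖h‖ hδ).mono fun _ => And.right)).exists
  have ht₀ : 0 < t := ht.1
  obtain ⟨L, hLM, hL⟩ := hA (S.image (t • ·)) (by
    intro w hw
    obtain ⟨h, hh, rfl⟩ := Finset.mem_image.1 hw
    simpa [norm_smul, abs_of_pos ht₀] using ht.2 h hh)
  refine ⟨L, hLM, fun h hh => ?_⟩
  calc ‖D h - L h‖ ≤ ‖dirSlope φ a h t - D h‖ + ‖dirSlope φ a h t - L h‖ := by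
        simpa only [dist_eq_norm] using dist_triangle_left _ _ (dirSlope φ a h t)
    _ ≤ 2 * c * ‖h‖ + c * ‖h‖ :=
        add_le_add (hA.norm_dirSlope_sub_le_of_tendsto (hD h) ht₀ (ht.2 h hh))
          (hL.norm_dirSlope_sub_le ht₀ (Finset.mem_image_of_mem _ hh))
    _ = 3 * c * ‖h‖ := by ring

end FinitelyApproximable

theorem exists_tendsto_dirSlope [CompleteSpace F]
    (H : ∀ c > 0, ∃ M δ, 0 < δ ∧ FinitelyApproximable φ a M δ c) (h : E) :
    ∃ v, Tendsto (dirSlope φ a h) (𝓝[>] 0) (𝓝 v) := by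
  refine cauchy_map_iff_exists_tendsto.1 (Metric.cauchy_iff.2 ⟨inferInstance, fun ε hε => ?_⟩)
  obtain ⟨M, δ, hδ, hA⟩ := H (ε / (2 * (‖h‖ + 1))) (by positivity)
  refine ⟨_, image_mem_map (eventually_mul_lt_nhdsGT ‖h‖ hδ), ?_⟩
  rintro _ ⟨s, hs, rfl⟩ _ ⟨t, ht, rfl⟩
  rw [dist_eq_norm]
  calc ‖dirSlope φ a h s - dirSlope φ a h t‖ ≤ 2 * (ε / (2 * (‖h‖ + 1))) * ‖h‖ :=
        hA.norm_dirSlope_sub_dirSlope_le hs.1 ht.1 hs.2 ht.2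
    _ < ε := by
        rw [mul_div_assoc', mul_div_mul_left _ _ two_ne_zero, div_mul_eq_mul_div,
          div_lt_iff₀ (by positivity)]
        nlinarith

theorem mem_closure_range_linearMap_coe {D : E → F}
    (hD : ∀ c > 0, ∀ S : Finset E, ∃ L : E →ₗ[ℝ] F, ∀ h ∈ S, ‖D h - L h‖ ≤ c * ‖h‖) :
    D ∈ closure (range ((↑) : (E →ₗ[ℝ] F) → E → F)) := by
  rw [mem_closure_iff_nhds_basis (nhds_pi (a := D) ▸ hasBasis_pi fun h => nhds_basis_ball)]
  rintro ⟨I, r⟩ ⟨hI, hr⟩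
  obtain ⟨c, hc, hcI⟩ := (eventually_mem_nhdsWithin.and (hI.eventually_all.2 fun h hh =>
    (eventually_mul_lt_nhdsGT ‖h‖ (hr h hh)).mono fun _ => And.right)).exists
  obtain ⟨L, hL⟩ := hD c hc hI.toFinset
  refine ⟨L, mem_range_self L, fun h hh => ?_⟩
  rw [mem_ball, dist_eq_norm, norm_sub_rev]
  exact (hL h (hI.mem_toFinset.2 hh)).trans_lt (hcI h hh)

theorem differentiableAt_of_forall_finitelyApproximable [CompleteSpace F]
    (H : ∀ c > 0, ∃ M δ, 0 < δ ∧ FinitelyApproximable φ a M δ c) : DifferentiableAt ℝ φ a := by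
  choose D hD using exists_tendsto_dirSlope H
  have hlin : D ∈ closure (range ((↑) : (E →ₗ[ℝ] F) → E → F)) := by
    refine mem_closure_range_linearMap_coe fun c hc S => ?_
    obtain ⟨M, δ, hδ, hA⟩ := H (c / 3) (by positivity)
    obtain ⟨L, -, hL⟩ := hA.exists_approx_of_tendsto hδ hD S
    exact ⟨L, fun h hh => (hL h hh).trans_eq (by ring)⟩
  obtain ⟨M, δ, hδ, hA⟩ := H 1 one_pos
  have hbound : ∀ h, ‖linearMapOfMemClosureRangeCoe D hlin h‖ ≤ (M + 3) * ‖h‖ := fun h => by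
    obtain ⟨L, hLM, hL⟩ := hA.exists_approx_of_tendsto hδ hD {h}
    calc ‖D h‖ ≤ ‖L h‖ + ‖D h - L h‖ := norm_le_insert' _ _
      _ ≤ M * ‖h‖ + 3 * 1 * ‖h‖ :=
          add_le_add (L.le_of_opNorm_le hLM h) (hL h (Finset.mem_singleton_self h))
      _ = (M + 3) * ‖h‖ := by ring
  refine ⟨(linearMapOfMemClosureRangeCoe D hlin).mkContinuous (M + 3) hbound, ?_⟩
  rw [hasFDerivAt_iff_isLittleO_nhds_zero, isLittleO_iff]
  intro c hc
  obtain ⟨M', δ', hδ', hA'⟩ := H (c / 2) (half_pos hc)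
  filter_upwards [ball_mem_nhds 0 hδ'] with h hh
  have hslope := hA'.norm_dirSlope_sub_le_of_tendsto (hD h) one_pos (by simpa using hh)
  simp only [dirSlope, inv_one, one_smul] at hslope
  simpa [mul_div_cancel₀] using hslope

end LinearApprox

section PartialDerivative

variable {X₁ X₂ Y : Type*} [NormedAddCommGroup X₁] [NormedSpace ℝ X₁]
  [NormedAddCommGroup Y] [NormedSpace ℝ Y]
  {f : X₁ × X₂ → Y} {M δ c : ℝ}

def partialApproxSet (f : X₁ × X₂ → Y) (M δ c : ℝ) : Set (X₁ × X₂) :=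
  {y | ∃ L : X₁ →L[ℝ] Y, ‖L‖ ≤ M ∧ IsLinearApproxOn (fun t => f (t, y.2)) y.1 L (ball 0 δ) c}

theorem exists_nat_mem_partialApproxSet {x : X₁ × X₂}
    (hx : DifferentiableAt ℝ (fun t => f (t, x.2)) x.1) (hc : 0 < c) :
    ∃ n : ℕ, x ∈ partialApproxSet f n (n + 1)⁻¹ c := by
  obtain ⟨δ, hδ, hL⟩ := hx.hasFDerivAt.exists_isLinearApproxOn_ball hc
  obtain ⟨n, hn⟩ := exists_nat_ge (max ‖fderiv ℝ (fun t => f (t, x.2)) x.1‖ δ⁻¹)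
  have hnδ : ((n : ℝ) + 1)⁻¹ ≤ δ :=
    inv_le_of_inv_le₀ hδ (((le_max_right _ _).trans hn).trans (le_add_of_nonneg_right zero_le_one))
  exact ⟨n, _, (le_max_left _ _).trans hn, hL.mono (ball_subset_ball hnδ)⟩

variable [TopologicalSpace X₂]

theorem eventually_norm_sub_lt_of_isLinearApproxOn
    (hf : ∀ a₁ : X₁, Continuous fun t : X₂ => f (a₁, t)) (hc : 0 ≤ c) (x : X₁ × X₂) {w : X₁}
    (hw : ‖w‖ < δ) {ε : ℝ} (hε : 0 < ε) :
    ∀ᶠ y in 𝓝 x, ∀ L : X₁ →L[ℝ] Y,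
      IsLinearApproxOn (fun t => f (t, y.2)) y.1 L (ball 0 δ) c →
        ‖f (x.1 + w, x.2) - f (x.1, x.2) - L w‖ < c * ‖w‖ + ε := by
  set ψ : X₁ × X₂ → Y := fun y => f (x.1 + w, y.2) - f (x.1, y.2)
  have hψ : Tendsto ψ (𝓝 x) (𝓝 (ψ x)) :=
    ((hf _).sub (hf _)).continuousAt.comp continuous_snd.continuousAt
  have he : Tendsto (fun y : X₁ × X₂ => ‖x.1 - y.1‖) (𝓝 x) (𝓝 0) := by
    simpa using ((continuous_const (y := x.1)).sub continuous_fst).norm.tendsto x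
  filter_upwards [he.eventually (gt_mem_nhds (sub_pos.2 hw)),
    (he.const_mul (2 * c)).eventually
      (gt_mem_nhds (by simpa using half_pos hε : 2 * c * 0 < ε / 2)),
    Metric.tendsto_nhds.1 hψ (ε / 2) (half_pos hε)] with y hyδ hyε hyψ L hL
  have hshift := hL.norm_sub_le_of_shift hc (e := x.1 - y.1) (w := w)
    (by linarith [norm_nonneg w]) ((norm_add_le _ _).trans_lt (by linarith))
  rw [add_sub_cancel] at hshift
  calc ‖f (x.1 + w, x.2) - f (x.1, x.2) - L w‖ ≤ ‖ψ x - ψ y‖ + ‖ψ y - L w‖ := by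
        simpa only [sub_sub_sub_cancel_right] using
          norm_sub_le_norm_sub_add_norm_sub (ψ x) (ψ y) (L w)
    _ < ε / 2 + (c * ‖w‖ + 2 * c * ‖x.1 - y.1‖) := by
        rw [← dist_eq_norm, dist_comm]; exact add_lt_add_of_lt_of_le hyψ hshift
    _ < c * ‖w‖ + ε := by linarith

theorem finitelyApproximable_of_mem_closure_partialApproxSet
    (hf : ∀ a₁ : X₁, Continuous fun t : X₂ => f (a₁, t)) (hc : 0 ≤ c) {c' : ℝ} (hcc' : c < c')
    {x : X₁ × X₂} (hx : x ∈ closure (partialApproxSet f M δ c)) :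
    FinitelyApproximable (fun t => f (t, x.2)) x.1 M δ c' := by
  intro S hS
  have hev : ∀ᶠ y in 𝓝 x, ∀ w ∈ S, ∀ L : X₁ →L[ℝ] Y,
      IsLinearApproxOn (fun t => f (t, y.2)) y.1 L (ball 0 δ) c →
        ‖f (x.1 + w, x.2) - f (x.1, x.2) - L w‖ ≤ c' * ‖w‖ := by
    refine S.eventually_all.2 fun w hw => ?_
    rcases eq_or_ne w 0 with rfl | hw₀
    · exact Eventually.of_forall fun y L _ => by simp
    · have hwpos : 0 < (c' - c) * ‖w‖ := mul_pos (sub_pos.2 hcc') (norm_pos_iff.2 hw₀)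
      refine (eventually_norm_sub_lt_of_isLinearApproxOn hf hc x
        (by simpa using hS hw) hwpos).mono fun y hy L hL => ?_
      exact (hy L hL).le.trans_eq (by ring)
  obtain ⟨y, hy, L, hLM, hL⟩ := (hev.and_frequently (mem_closure_iff_frequently.1 hx)).exists
  exact ⟨L, hLM, fun w hw => hy w hw L hL⟩

end PartialDerivative

theorem isFSigmaDelta_partial_frechet_points_general
    {X₁ X₂ Y : Type*} [NormedAddCommGroup X₁] [NormedSpace ℝ X₁]
    [NormedAddCommGroup X₂] [NormedSpace ℝ X₂]
    [NormedAddCommGroup Y] [NormedSpace ℝ Y] [CompleteSpace Y]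
    (f : X₁ × X₂ → Y) (hf : ∀ a₁ : X₁, Continuous (fun t : X₂ => f (a₁, t))) :
    IsFSigmaDelta {x : X₁ × X₂ | DifferentiableAt ℝ (fun t : X₁ => f (t, x.2)) x.1} := by
  refine ⟨fun k : ℕ => ⋃ n : ℕ, closure (partialApproxSet f n ((n : ℝ) + 1)⁻¹ ((k : ℝ) + 1)⁻¹),
    fun k => ⟨_, fun n => isClosed_closure, rfl⟩, ?_⟩
  ext x
  simp only [mem_iInter, mem_iUnion]
  constructor
  · intro hx k
    obtain ⟨n, hn⟩ := exists_nat_mem_partialApproxSet hx (by positivity : (0 : ℝ) < ((k : ℝ) + 1)⁻¹)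
    exact ⟨n, subset_closure hn⟩
  · intro hx
    refine differentiableAt_of_forall_finitelyApproximable fun c hc => ?_
    obtain ⟨k, hk⟩ := exists_nat_one_div_lt hc
    obtain ⟨n, hn⟩ := hx k
    exact ⟨n, _, by positivity, finitelyApproximable_of_mem_closure_partialApproxSet hf
      (by positivity) (by simpa only [one_div] using hk) hn⟩

theorem isFSigmaDelta_partial_frechet_points
    {X₁ X₂ Y : Type*} [NormedAddCommGroup X₁] [NormedSpace ℝ X₁] [CompleteSpace X₁]
    [NormedAddCommGroup X₂] [NormedSpace ℝ X₂] [CompleteSpace X₂]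
    [NormedAddCommGroup Y] [NormedSpace ℝ Y] [CompleteSpace Y]
    (f : X₁ × X₂ → Y) (hf : ∀ a₁ : X₁, Continuous (fun t : X₂ => f (a₁, t))) :
    IsFSigmaDelta {x : X₁ × X₂ | DifferentiableAt ℝ (fun t : X₁ => f (t, x.2)) x.1} :=
  isFSigmaDelta_partial_frechet_points_general f hf
end

section
/- Let X₁, X₂, Y be Banach spaces, G ⊆ X := X₁ × X₂ an open set, and f : G → Y a mapping which is continuous with respect to the second variable. Then the set of points x ∈ G at which the partial Fréchet derivative of f with respect to the first variable exists is an F_{σδσ} set. -/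
/-!
Differentiability at `0` of a map `g` with `g 0 = 0` can be tested without naming the derivative:
on small balls `g` must be additive and positively homogeneous up to `ε * size`, and bounded by
`C * ‖h‖` with `C` independent of `ε`. The derivative is then the limit of the blow-ups
`s⁻¹ • g (s • h)`, which approximate homogeneity makes Cauchy as `s → 0`. Applied to the increment
`h ↦ f (x.1 + h, x.2) - f x` with rational parameters, this writes the set of differentiability
points as `⋃ m, ⋂ k, ⋃ n, closure (S m k n)`, where `S m k n` is the set of points passing the test
with constant `m`, error `1 / (k + 1)` and radius `1 / (n + 1)`. Taking closures costs only a
constant factor: if `y → x`, then `w ↦ f (x.1 + w, y.2)` is a translate of the increment at `y`,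
whose defects are sums of defects at `y`, and it tends to `w ↦ f (x.1 + w, x.2)` by continuity in
the second variable.
-/

open Metric Set Topology

/-- An `Fσδσ` set: a countable union of `Fσδ` sets. -/
def IsFSigmaDeltaSigma {Z : Type*} [TopologicalSpace Z] (s : Set Z) : Prop :=
  ∃ u : ℕ → Set Z, (∀ n, IsFSigmaDelta (u n)) ∧ s = ⋃ n, u n

open Filter Asymptotics

section NormedSpace

variable {E F : Type*} [NormedAddCommGroup E] [NormedSpace ℝ E]
  [NormedAddCommGroup F] [NormedSpace ℝ F]

/-- The slack `η` carries errors that only vanish in a limit, see `NearlyLinear.of_tendsto`. -/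
structure NearlyLinear (C ε ρ η : ℝ) (g : E → F) : Prop where
  add_le : ∀ u v, ‖u‖ ≤ ρ → ‖v‖ ≤ ρ → ‖g u + g v - g (u + v)‖ ≤ ε * (‖u‖ + ‖v‖) + η
  smul_le : ∀ u, ‖u‖ ≤ ρ → ∀ t ∈ Icc (0 : ℝ) 1, ‖g (t • u) - t • g u‖ ≤ ε * (t * ‖u‖) + η
  norm_le : ∀ u, ‖u‖ ≤ ρ → ‖g u‖ ≤ C * ‖u‖ + η

namespace NearlyLinear

variable {C ε ρ η : ℝ} {g : E → F}

theorem mono {C' ε' ρ' η' : ℝ} (h : NearlyLinear C ε ρ η g) (hC : C ≤ C') (hε : ε ≤ ε')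
    (hρ : ρ' ≤ ρ) (hη : η ≤ η') : NearlyLinear C' ε' ρ' η' g where
  add_le u v hu hv := (h.add_le u v (hu.trans hρ) (hv.trans hρ)).trans (by gcongr)
  smul_le u hu t ht := (h.smul_le u (hu.trans hρ) t ht).trans (by have := ht.1; gcongr)
  norm_le u hu := (h.norm_le u (hu.trans hρ)).trans (by gcongr)

theorem of_tendsto {ι : Type*} {l : Filter ι} [l.NeBot] {G : ι → E → F}
    (hG : ∀ w, ‖w‖ ≤ 2 * ρ → Tendsto (fun i => G i w) l (𝓝 (g w)))
    (h : ∀ η > 0, ∀ᶠ i in l, NearlyLinear C ε ρ η (G i)) : NearlyLinear C ε ρ 0 g := by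
  have hρ2 : ∀ {w : E}, ‖w‖ ≤ ρ → ‖w‖ ≤ 2 * ρ := fun hw => by
    linarith [(norm_nonneg _).trans hw]
  refine ⟨fun u v hu hv => ?_, fun u hu t ht => ?_, fun u hu => ?_⟩ <;>
    refine le_of_forall_pos_le_add fun η hη => ?_ <;> rw [add_zero]
  · have huv : ‖u + v‖ ≤ 2 * ρ := (norm_add_le u v).trans (by linarith)
    exact le_of_tendsto (((hG u (hρ2 hu)).add (hG v (hρ2 hv))).sub (hG _ huv)).norm
      ((h η hη).mono fun i hi => hi.add_le u v hu hv)
  · have htu : ‖t • u‖ ≤ ρ := by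
      rw [norm_smul, Real.norm_of_nonneg ht.1]
      exact (mul_le_of_le_one_left (norm_nonneg u) ht.2).trans hu
    exact le_of_tendsto ((hG _ (hρ2 htu)).sub ((hG u (hρ2 hu)).const_smul t)).norm
      ((h η hη).mono fun i hi => hi.smul_le u hu t ht)
  · exact le_of_tendsto (hG u (hρ2 hu)).norm ((h η hη).mono fun i hi => hi.norm_le u hu)

/-- Each defect of `w ↦ g (e + w) - g e` is a combination of at most four defects of `g`. -/
theorem translate (h : NearlyLinear C ε ρ 0 g) (hε : 0 ≤ ε) {e : E} (he : ‖e‖ ≤ ρ) :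
    NearlyLinear (C + ε) (3 * ε) (ρ / 2) (3 * ε * ‖e‖) (fun w => g (e + w) - g e) := by
  have hρ : ∀ {w : E}, ‖w‖ ≤ ρ / 2 → ‖w‖ ≤ ρ := fun hw => by
    linarith [(norm_nonneg _).trans hw]
  have hD := h.add_le
  simp only [add_zero] at hD
  refine ⟨fun u v hu hv => ?_, fun u hu t ht => ?_, fun u hu => ?_⟩
  · have huv : ‖u + v‖ ≤ ‖u‖ + ‖v‖ := norm_add_le u v
    have hid : g (e + u) - g e + (g (e + v) - g e) - (g (e + (u + v)) - g e) =
        (g e + g (u + v) - g (e + (u + v))) + (g u + g v - g (u + v))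
          - (g e + g u - g (e + u)) - (g e + g v - g (e + v)) := by abel
    rw [hid]
    have h1 := hD e (u + v) he (huv.trans (by linarith))
    have h2 := hD u v (hρ hu) (hρ hv)
    have h3 := hD e u he (hρ hu)
    have h4 := hD e v he (hρ hv)
    calc _ ≤ ‖g e + g (u + v) - g (e + (u + v))‖ + ‖g u + g v - g (u + v)‖
          + ‖g e + g u - g (e + u)‖ + ‖g e + g v - g (e + v)‖ := by
          refine (norm_sub_le _ _).trans (add_le_add_left ((norm_sub_le _ _).trans
            (add_le_add_left (norm_add_le _ _) _)) _)
      _ ≤ 3 * ε * (‖u‖ + ‖v‖) + 3 * ε * ‖e‖ := by nlinarith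
  · obtain ⟨ht0, ht1⟩ := ht
    have htu : ‖t • u‖ = t * ‖u‖ := by rw [norm_smul, Real.norm_of_nonneg ht0]
    have hid : g (e + t • u) - g e - t • (g (e + u) - g e) =
        (g (t • u) - t • g u) + t • (g e + g u - g (e + u))
          - (g e + g (t • u) - g (e + t • u)) := by module
    rw [hid]
    have h1 := h.smul_le u (hρ hu) t ⟨ht0, ht1⟩
    have h2 := hD e u he (hρ hu)
    have h3 := hD e (t • u) he
      (by rw [htu]; linarith [hρ hu, mul_le_of_le_one_left (norm_nonneg u) ht1])
    rw [add_zero] at h1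
    rw [htu] at h3
    calc _ ≤ ‖g (t • u) - t • g u‖ + t * ‖g e + g u - g (e + u)‖
          + ‖g e + g (t • u) - g (e + t • u)‖ := by
          refine (norm_sub_le _ _).trans (add_le_add_left ((norm_add_le _ _).trans ?_) _)
          rw [norm_smul, Real.norm_of_nonneg ht0]
      _ ≤ 3 * ε * (t * ‖u‖) + 3 * ε * ‖e‖ := by
          have h2' := mul_le_mul_of_nonneg_left h2 ht0
          have hte := mul_le_mul_of_nonneg_left (mul_le_of_le_one_left (norm_nonneg e) ht1) hε
          nlinarith [norm_nonneg e]
  · have h1 := h.norm_le u (hρ hu)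
    have h2 := hD e u he (hρ hu)
    rw [add_zero] at h1
    calc ‖g (e + u) - g e‖ = ‖g u - (g e + g u - g (e + u))‖ := by congr 1; abel
      _ ≤ ‖g u‖ + ‖g e + g u - g (e + u)‖ := norm_sub_le _ _
      _ ≤ (C + ε) * ‖u‖ + 3 * ε * ‖e‖ := by nlinarith [norm_nonneg e]

end NearlyLinear

noncomputable def rescale (s : ℝ) (g : E → F) : E → F := fun w => s⁻¹ • g (s • w)

section Rescale

variable {C ε δ s t : ℝ} {g : E → F}

theorem nearlyLinear_rescale (h : NearlyLinear C ε δ 0 g) (hs : 0 < s) :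
    NearlyLinear C ε (s⁻¹ * δ) 0 (rescale s g) := by
  have hsw : ∀ {w : E}, ‖w‖ ≤ s⁻¹ * δ → ‖s • w‖ ≤ δ := fun hw => by
    rwa [norm_smul, Real.norm_of_nonneg hs.le, ← le_inv_mul_iff₀ hs]
  have hns : ∀ w : E, ‖s • w‖ = s * ‖w‖ := fun w => by rw [norm_smul, Real.norm_of_nonneg hs.le]
  have hinv : ∀ y : F, ‖s⁻¹ • y‖ = s⁻¹ * ‖y‖ := fun y => by
    rw [norm_smul, Real.norm_of_nonneg (inv_pos.2 hs).le]
  refine ⟨fun u v hu hv => ?_, fun u hu t ht => ?_, fun u hu => ?_⟩ <;> simp only [rescale]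
  · have := h.add_le _ _ (hsw hu) (hsw hv)
    rw [← smul_add, ← smul_sub, hinv, smul_add, ← le_inv_mul_iff₀ (inv_pos.2 hs), inv_inv]
    rw [hns, hns, add_zero] at this
    linarith
  · have := h.smul_le _ (hsw hu) t ht
    rw [smul_comm s t u, smul_comm t s⁻¹, ← smul_sub, hinv, ← le_inv_mul_iff₀ (inv_pos.2 hs),
      inv_inv]
    rw [hns, add_zero] at this
    linarith
  · have := h.norm_le _ (hsw hu)
    rw [hinv, ← le_inv_mul_iff₀ (inv_pos.2 hs), inv_inv]
    rw [hns, add_zero] at this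
    linarith

theorem norm_rescale_sub_rescale_le (h : NearlyLinear C ε δ 0 g) (hs : 0 < s)
    (hst : s ≤ t) {w : E} (hw : t * ‖w‖ ≤ δ) : ‖rescale s g w - rescale t g w‖ ≤ ε * ‖w‖ := by
  have ht : 0 < t := hs.trans_le hst
  have hr : s / t ∈ Icc (0 : ℝ) 1 := ⟨by positivity, (div_le_one ht).2 hst⟩
  have hu : ‖t • w‖ ≤ δ := by rwa [norm_smul, Real.norm_of_nonneg ht.le]
  have key := h.smul_le _ hu _ hr
  have hsw : (s / t) • t • w = s • w := by rw [smul_smul, div_mul_cancel₀ _ ht.ne']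
  have hid : rescale s g w - rescale t g w
      = s⁻¹ • (g ((s / t) • t • w) - (s / t) • g (t • w)) := by
    rw [hsw, smul_sub, smul_smul, rescale, rescale]
    congr 2
    field_simp
  rw [hid, norm_smul, Real.norm_of_nonneg (inv_pos.2 hs).le, ← le_inv_mul_iff₀ (inv_pos.2 hs),
    inv_inv]
  rw [norm_smul, Real.norm_of_nonneg ht.le, add_zero] at key
  calc _ ≤ ε * (s / t * (t * ‖w‖)) := key
    _ = s * (ε * ‖w‖) := by field_simp

end Rescale

noncomputable def rescaleLim (g : E → F) (w : E) : F :=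
  limUnder atTop fun j : ℕ => rescale (1 / ((j : ℝ) + 1)) g w

section Criterion

variable {C : ℝ} {g : E → F}

theorem eventually_one_div_add_one_mul_lt (a : ℝ) {δ : ℝ} (hδ : 0 < δ) :
    ∀ᶠ j : ℕ in atTop, 1 / ((j : ℝ) + 1) * a < δ := by
  have := tendsto_one_div_add_atTop_nhds_zero_nat.mul_const a
  rw [zero_mul] at this
  exact this.eventually (gt_mem_nhds hδ)

theorem cauchySeq_rescale (h : ∀ ε > 0, ∃ δ > 0, NearlyLinear C ε δ 0 g) (w : E) :
    CauchySeq fun j : ℕ => rescale (1 / ((j : ℝ) + 1)) g w := by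
  rw [Metric.cauchySeq_iff']
  intro ε hε
  obtain ⟨δ, hδ, hg⟩ := h (ε / (‖w‖ + 1)) (by positivity)
  obtain ⟨N, hN⟩ := (eventually_one_div_add_one_mul_lt ‖w‖ hδ).exists
  refine ⟨N, fun n hn => (dist_eq_norm _ _).trans_lt
    ((norm_rescale_sub_rescale_le hg (by positivity) ?_ hN.le).trans_lt ?_)⟩
  · gcongr
  · rw [div_mul_eq_mul_div, div_lt_iff₀ (by positivity)]
    nlinarith [norm_nonneg w]

variable [CompleteSpace F]

theorem tendsto_rescaleLim (h : ∀ ε > 0, ∃ δ > 0, NearlyLinear C ε δ 0 g) (w : E) :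
    Tendsto (fun j : ℕ => rescale (1 / ((j : ℝ) + 1)) g w) atTop (𝓝 (rescaleLim g w)) :=
  (cauchySeq_rescale h w).tendsto_limUnder

theorem norm_sub_rescaleLim_le (h : ∀ ε > 0, ∃ δ > 0, NearlyLinear C ε δ 0 g) {ε δ : ℝ}
    (hg : NearlyLinear C ε δ 0 g) {w : E} (hw : ‖w‖ ≤ δ) :
    ‖g w - rescaleLim g w‖ ≤ ε * ‖w‖ := by
  have hg1 : rescale 1 g = g := by ext; simp [rescale]
  rw [norm_sub_rev]
  refine le_of_tendsto (((tendsto_rescaleLim h w).sub_const (g w)).norm) (.of_forall fun j => ?_)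
  have := norm_rescale_sub_rescale_le hg (s := 1 / ((j : ℝ) + 1)) (t := 1) (by positivity)
    (by rw [div_le_one (by positivity)]; linarith [j.cast_nonneg (α := ℝ)]) (by rwa [one_mul])
  rwa [hg1] at this

theorem nearlyLinear_rescaleLim (h : ∀ ε > 0, ∃ δ > 0, NearlyLinear C ε δ 0 g) {ε : ℝ}
    (hε : 0 < ε) (ρ : ℝ) : NearlyLinear C ε ρ 0 (rescaleLim g) := by
  obtain ⟨δ, hδ, hg⟩ := h ε hε
  refine .of_tendsto (fun w _ => tendsto_rescaleLim h w) fun η hη => ?_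
  filter_upwards [eventually_one_div_add_one_mul_lt ρ hδ] with j hj
  exact (nearlyLinear_rescale hg (by positivity)).mono le_rfl le_rfl
    ((le_inv_mul_iff₀ (by positivity)).2 hj.le) hη.le

theorem rescaleLim_add (h : ∀ ε > 0, ∃ δ > 0, NearlyLinear C ε δ 0 g) (u v : E) :
    rescaleLim g (u + v) = rescaleLim g u + rescaleLim g v := by
  have hle : ∀ ε > 0, ‖rescaleLim g u + rescaleLim g v - rescaleLim g (u + v)‖
      ≤ ε * (‖u‖ + ‖v‖) := fun ε hε => by
    simpa using (nearlyLinear_rescaleLim h hε (max ‖u‖ ‖v‖)).add_le u v (le_max_left _ _)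
      (le_max_right _ _)
  have hzero : ‖rescaleLim g u + rescaleLim g v - rescaleLim g (u + v)‖ ≤ 0 := by
    refine ge_of_tendsto ?_ (eventually_nhdsWithin_of_forall (s := Ioi 0) (a := (0 : ℝ)) hle)
    simpa using (tendsto_id.mul_const (‖u‖ + ‖v‖)).mono_left (nhdsWithin_le_nhds (a := (0 : ℝ)))
  rw [norm_le_zero_iff, sub_eq_zero] at hzero
  exact hzero.symm

theorem norm_rescaleLim_le (h : ∀ ε > 0, ∃ δ > 0, NearlyLinear C ε δ 0 g) (u : E) :
    ‖rescaleLim g u‖ ≤ C * ‖u‖ := by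
  simpa using (nearlyLinear_rescaleLim h one_pos ‖u‖).norm_le u le_rfl

theorem exists_hasFDerivAt_zero_of_nearlyLinear
    (h : ∀ ε > 0, ∃ δ > 0, NearlyLinear C ε δ 0 g) : ∃ L : E →L[ℝ] F, HasFDerivAt g L 0 := by
  let A : E →+ F := AddMonoidHom.mk' (rescaleLim g) (rescaleLim_add h)
  refine ⟨A.toRealLinearMap (AddMonoidHomClass.continuous_of_bound A C (norm_rescaleLim_le h)), ?_⟩
  obtain ⟨δ₀, hδ₀, hg₀⟩ := h 1 one_pos
  have hg0 : g 0 = 0 := by simpa using hg₀.norm_le 0 (by simpa using hδ₀.le)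
  rw [hasFDerivAt_iff_isLittleO_nhds_zero, isLittleO_iff]
  intro ε hε
  obtain ⟨δ, hδ, hg⟩ := h ε hε
  filter_upwards [closedBall_mem_nhds (0 : E) hδ] with w hw
  rw [mem_closedBall_zero_iff] at hw
  simpa [hg0, A] using norm_sub_rescaleLim_le h hg hw

end Criterion

theorem HasFDerivAt.nearlyLinear {g : E → F} {L : E →L[ℝ] F} (hg : HasFDerivAt g L 0)
    (hg0 : g 0 = 0) {ε : ℝ} (hε : 0 < ε) : ∃ δ > 0, NearlyLinear (‖L‖ + 1) ε δ 0 g := by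
  set c := min (ε / 2) 1
  have hc : 0 < c := by positivity
  rw [hasFDerivAt_iff_isLittleO_nhds_zero, isLittleO_iff] at hg
  obtain ⟨δ', hδ', hr⟩ := Metric.eventually_nhds_iff.1 (hg hc)
  have hr' : ∀ w : E, ‖w‖ ≤ 2 * (δ' / 3) → ‖g w - L w‖ ≤ c * ‖w‖ := fun w hw => by
    simpa [hg0] using hr (y := w) (by rw [dist_zero_right]; linarith)
  have h2c : 2 * c ≤ ε := by linarith [min_le_left (ε / 2) 1]
  refine ⟨δ' / 3, by positivity, fun u v hu hv => ?_, fun u hu t ht => ?_, fun u hu => ?_⟩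
  · have huv : ‖u + v‖ ≤ ‖u‖ + ‖v‖ := norm_add_le u v
    have h1 := hr' u (by linarith [norm_nonneg u])
    have h2 := hr' v (by linarith [norm_nonneg v])
    have h3 := hr' (u + v) (by linarith)
    calc ‖g u + g v - g (u + v)‖ = ‖(g u - L u) + (g v - L v) - (g (u + v) - L (u + v))‖ := by
          rw [map_add]; congr 1; abel
      _ ≤ ‖g u - L u‖ + ‖g v - L v‖ + ‖g (u + v) - L (u + v)‖ :=
          (norm_sub_le _ _).trans (add_le_add_left (norm_add_le _ _) _)
      _ ≤ ε * (‖u‖ + ‖v‖) + 0 := by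
          have := mul_le_mul_of_nonneg_left huv hc.le
          have := mul_le_mul_of_nonneg_right h2c (add_nonneg (norm_nonneg u) (norm_nonneg v))
          linarith
  · obtain ⟨ht0, ht1⟩ := ht
    have htu : ‖t • u‖ = t * ‖u‖ := by rw [norm_smul, Real.norm_of_nonneg ht0]
    have h1 := hr' u (by linarith [norm_nonneg u])
    have h2 := hr' (t • u) (by nlinarith [norm_nonneg u])
    calc ‖g (t • u) - t • g u‖ = ‖(g (t • u) - L (t • u)) - t • (g u - L u)‖ := by
          rw [map_smul, smul_sub, sub_sub_sub_cancel_right]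
      _ ≤ ‖g (t • u) - L (t • u)‖ + t * ‖g u - L u‖ := by
          refine (norm_sub_le _ _).trans_eq ?_
          rw [norm_smul, Real.norm_of_nonneg ht0]
      _ ≤ ε * (t * ‖u‖) + 0 := by
          rw [htu] at h2
          have := mul_le_mul_of_nonneg_left h1 ht0
          have := mul_le_mul_of_nonneg_right h2c (mul_nonneg ht0 (norm_nonneg u))
          linarith
  · have h1 := hr' u (by linarith [norm_nonneg u])
    calc ‖g u‖ = ‖(g u - L u) + L u‖ := by rw [sub_add_cancel]
      _ ≤ c * ‖u‖ + ‖L‖ * ‖u‖ := (norm_add_le _ _).trans (add_le_add h1 (L.le_opNorm u))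
      _ ≤ (‖L‖ + 1) * ‖u‖ + 0 := by nlinarith [min_le_right (ε / 2) 1, norm_nonneg u]

end NormedSpace

theorem isFSigmaDeltaSigma_iUnion_iInter_iUnion_closure {Z : Type*} [TopologicalSpace Z]
    (s : ℕ → ℕ → ℕ → Set Z) : IsFSigmaDeltaSigma (⋃ m, ⋂ k, ⋃ n, closure (s m k n)) :=
  ⟨_, fun _ => ⟨_, fun _ => ⟨_, fun _ => isClosed_closure, rfl⟩, rfl⟩, rfl⟩

def incrFst {X₁ X₂ Y : Type*} [Add X₁] [Sub Y] (f : X₁ × X₂ → Y) (x : X₁ × X₂) (h : X₁) : Y :=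
  f (x.1 + h, x.2) - f x

@[simp]
theorem incrFst_zero {X₁ X₂ Y : Type*} [AddZeroClass X₁] [AddGroup Y] (f : X₁ × X₂ → Y)
    (x : X₁ × X₂) : incrFst f x 0 = 0 := by
  simp [incrFst]

theorem differentiableAt_incrFst_iff {X₁ X₂ Y : Type*} [NormedAddCommGroup X₁]
    [NormedSpace ℝ X₁] [NormedAddCommGroup Y] [NormedSpace ℝ Y] {f : X₁ × X₂ → Y} {x : X₁ × X₂} :
    DifferentiableAt ℝ (incrFst f x) 0 ↔ DifferentiableAt ℝ (fun t => f (t, x.2)) x.1 := by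
  change DifferentiableAt ℝ (fun h => f (x.1 + h, x.2) - f x) 0 ↔ _
  simp only [sub_eq_add_neg, differentiableAt_add_const_iff]
  rw [differentiableAt_comp_add_left (f := fun t => f (t, x.2)), add_zero]

section PartialDerivative

variable {X₁ X₂ Y : Type*} [NormedAddCommGroup X₁] [NormedSpace ℝ X₁]
  [NormedAddCommGroup X₂] [NormedAddCommGroup Y] [NormedSpace ℝ Y]
  {G : Set (X₁ × X₂)} {f : X₁ × X₂ → Y}

def nearlyLinearSet (G : Set (X₁ × X₂)) (f : X₁ × X₂ → Y) (m k n : ℕ) : Set (X₁ × X₂) :=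
  {y | closedBall y (2 * (1 / ((n : ℝ) + 1))) ⊆ G ∧
    NearlyLinear m (1 / ((k : ℝ) + 1)) (1 / ((n : ℝ) + 1)) 0 (incrFst f y)}

theorem exists_forall_mem_nearlyLinearSet (hG : IsOpen G) {x : X₁ × X₂} (hx : x ∈ G)
    (hd : DifferentiableAt ℝ (fun t => f (t, x.2)) x.1) :
    ∃ m : ℕ, ∀ k, ∃ n, x ∈ nearlyLinearSet G f m k n := by
  have hd' := (differentiableAt_incrFst_iff.2 hd).hasFDerivAt
  obtain ⟨m, hm⟩ := exists_nat_ge (‖fderiv ℝ (incrFst f x) 0‖ + 1)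
  obtain ⟨r, hr, hrG⟩ := Metric.isOpen_iff.1 hG x hx
  refine ⟨m, fun k => ?_⟩
  obtain ⟨δ, hδ, hxδ⟩ :=
    hd'.nearlyLinear (incrFst_zero f x) (ε := 1 / ((k : ℝ) + 1)) (by positivity)
  obtain ⟨n, hn⟩ := exists_nat_one_div_lt (lt_min hδ (half_pos hr))
  refine ⟨n, (closedBall_subset_ball ?_).trans hrG, hxδ.mono hm le_rfl ?_ le_rfl⟩
  · linarith [min_le_right δ (r / 2)]
  · linarith [min_le_left δ (r / 2)]

theorem nearlyLinear_incrFst_of_mem_closure (hG : IsOpen G)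
    (hf : ∀ a₁ : X₁, ContinuousOn (fun t : X₂ => f (a₁, t)) {t : X₂ | (a₁, t) ∈ G})
    {m k n : ℕ} {x : X₁ × X₂} (hx : x ∈ closure (nearlyLinearSet G f m k n)) :
    x ∈ G ∧ NearlyLinear (m + 1) (3 * (1 / ((k : ℝ) + 1))) (1 / ((n : ℝ) + 1) / 2) 0
      (incrFst f x) := by
  set r : ℝ := 1 / ((n : ℝ) + 1)
  set ε : ℝ := 1 / ((k : ℝ) + 1)
  have hr : 0 < r := by positivity
  have hε : 0 < ε := by positivity
  have hball : closedBall x r ⊆ G := by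
    obtain ⟨y, hy, hxy⟩ := Metric.mem_closure_iff.1 hx r hr
    exact (closedBall_subset_closedBall' (by linarith)).trans hy.1
  have hcont : ∀ w : X₁, ‖w‖ ≤ r → ContinuousAt (fun τ => f (x.1 + w, τ)) x.2 := fun w hw =>
    have hwG : (x.1 + w, x.2) ∈ G := hball (by
      rw [mem_closedBall, Prod.dist_eq, dist_self, dist_eq_norm, add_sub_cancel_left]
      exact max_le hw hr.le)
    (hf _).continuousAt ((hG.preimage (Continuous.prodMk_right _)).mem_nhds hwG)
  refine ⟨hball (mem_closedBall_self hr.le), ?_⟩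
  have := mem_closure_iff_nhdsWithin_neBot.1 hx
  have htrans : ∀ y : X₁ × X₂, ∀ w, incrFst f y (x.1 - y.1 + w) - incrFst f y (x.1 - y.1)
      = f (x.1 + w, y.2) - f (x.1, y.2) := fun y w => by
    simp only [incrFst, ← add_assoc, add_sub_cancel, sub_sub_sub_cancel_right]
  have hsnd : Tendsto Prod.snd (𝓝[nearlyLinearSet G f m k n] x) (𝓝 x.2) :=
    (continuous_snd.tendsto x).mono_left nhdsWithin_le_nhds
  have hfst : Tendsto Prod.fst (𝓝[nearlyLinearSet G f m k n] x) (𝓝 x.1) :=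
    (continuous_fst.tendsto x).mono_left nhdsWithin_le_nhds
  refine .of_tendsto (l := 𝓝[nearlyLinearSet G f m k n] x)
    (G := fun (y : X₁ × X₂) (w : X₁) => f (x.1 + w, y.2) - f (x.1, y.2)) (fun w hw => ?_)
    fun η hη => ?_
  · have hw' : ‖w‖ ≤ r := by linarith
    simpa [incrFst] using ((hcont w hw').tendsto.comp hsnd).sub
      ((hcont 0 (by simpa using hr.le)).tendsto.comp hsnd)
  · have hη' : 0 < min r (η / (3 * ε)) := lt_min hr (by positivity)
    filter_upwards [self_mem_nhdsWithin, hfst.eventually (closedBall_mem_nhds x.1 hη')]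
      with y hy hyx
    rw [dist_comm, dist_eq_norm] at hyx
    have := hy.2.translate hε.le (hyx.trans (min_le_left _ _))
    simp only [htrans] at this
    refine this.mono ?_ le_rfl le_rfl ?_
    · have hε1 : ε ≤ 1 := div_le_one_of_le₀ (le_add_of_nonneg_left k.cast_nonneg) (by positivity)
      linarith
    · exact (le_div_iff₀' (by positivity)).1 (hyx.trans (min_le_right _ _))

theorem differentiableAt_of_forall_mem_closure_nearlyLinearSet [CompleteSpace Y] (hG : IsOpen G)
    (hf : ∀ a₁ : X₁, ContinuousOn (fun t : X₂ => f (a₁, t)) {t : X₂ | (a₁, t) ∈ G})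
    {m : ℕ} {x : X₁ × X₂} (hx : ∀ k, ∃ n, x ∈ closure (nearlyLinearSet G f m k n)) :
    x ∈ G ∧ DifferentiableAt ℝ (fun t => f (t, x.2)) x.1 := by
  choose n hn using hx
  have hnl : ∀ ε > 0, ∃ δ > 0, NearlyLinear (m + 1) ε δ 0 (incrFst f x) := fun ε hε => by
    obtain ⟨k, hk⟩ := exists_nat_one_div_lt (div_pos hε three_pos)
    exact ⟨_, by positivity,
      (nearlyLinear_incrFst_of_mem_closure hG hf (hn k)).2.mono le_rfl (by linarith) le_rfl le_rfl⟩
  obtain ⟨L, hL⟩ := exists_hasFDerivAt_zero_of_nearlyLinear hnl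
  exact ⟨(nearlyLinear_incrFst_of_mem_closure hG hf (hn 0)).1,
    differentiableAt_incrFst_iff.1 hL.differentiableAt⟩

end PartialDerivative

theorem isFSigmaDeltaSigma_partial_frechet_points_general
    {X₁ X₂ Y : Type*} [NormedAddCommGroup X₁] [NormedSpace ℝ X₁]
    [NormedAddCommGroup X₂]
    [NormedAddCommGroup Y] [NormedSpace ℝ Y] [CompleteSpace Y]
    (G : Set (X₁ × X₂)) (hG : IsOpen G) (f : X₁ × X₂ → Y)
    (hf : ∀ a₁ : X₁, ContinuousOn (fun t : X₂ => f (a₁, t)) {t : X₂ | (a₁, t) ∈ G}) :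
    IsFSigmaDeltaSigma {x ∈ G | DifferentiableAt ℝ (fun t : X₁ => f (t, x.2)) x.1} := by
  convert isFSigmaDeltaSigma_iUnion_iInter_iUnion_closure (nearlyLinearSet G f)
  ext x
  simp only [mem_sep_iff, mem_iUnion, mem_iInter]
  refine ⟨fun ⟨hxG, hd⟩ => ?_, fun ⟨m, hm⟩ =>
    differentiableAt_of_forall_mem_closure_nearlyLinearSet hG hf hm⟩
  obtain ⟨m, hm⟩ := exists_forall_mem_nearlyLinearSet hG hxG hd
  exact ⟨m, fun k => (hm k).imp fun n hn => subset_closure hn⟩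

theorem isFSigmaDeltaSigma_partial_frechet_points
    {X₁ X₂ Y : Type*} [NormedAddCommGroup X₁] [NormedSpace ℝ X₁] [CompleteSpace X₁]
    [NormedAddCommGroup X₂] [NormedSpace ℝ X₂] [CompleteSpace X₂]
    [NormedAddCommGroup Y] [NormedSpace ℝ Y] [CompleteSpace Y]
    (G : Set (X₁ × X₂)) (hG : IsOpen G) (f : X₁ × X₂ → Y)
    (hf : ∀ a₁ : X₁, ContinuousOn (fun t : X₂ => f (a₁, t)) {t : X₂ | (a₁, t) ∈ G}) :
    IsFSigmaDeltaSigma {x ∈ G | DifferentiableAt ℝ (fun t : X₁ => f (t, x.2)) x.1} :=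
  isFSigmaDeltaSigma_partial_frechet_points_general G hG f hf
end

section
/- Let X, Y be Banach spaces, G ⊆ X an open set, and f : G → Y an arbitrary mapping. Then the set of all points x ∈ G at which f is Fréchet differentiable is an F_{σδ} set. -/
open Metric Set Topology

section Aux

lemma IsFSigma.inter' {Z : Type*} [TopologicalSpace Z] {s t : Set Z}
    (hs : IsFSigma s) (ht : IsFSigma t) : IsFSigma (s ∩ t) := by
  obtain ⟨u, hu, rfl⟩ := hs
  obtain ⟨v, hv, rfl⟩ := ht
  refine ⟨fun k => u (Nat.unpair k).1 ∩ v (Nat.unpair k).2,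
    fun k => (hu _).inter (hv _), ?_⟩
  ext x
  simp only [mem_inter_iff, mem_iUnion]
  constructor
  · rintro ⟨⟨i, hi⟩, ⟨j, hj⟩⟩
    refine ⟨Nat.pair i j, ?_, ?_⟩ <;> simp [Nat.unpair_pair, hi, hj]
  · rintro ⟨k, hk, hk'⟩
    exact ⟨⟨_, hk⟩, ⟨_, hk'⟩⟩

lemma isFSigma_of_isOpen {Z : Type*} [PseudoMetricSpace Z] {G : Set Z} (hG : IsOpen G) :
    IsFSigma G := by
  refine ⟨fun n => ⋂ y ∈ Gᶜ, {x | 1 / ((n : ℝ) + 1) ≤ dist x y}, fun n => ?_, ?_⟩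
  · exact isClosed_iInter fun y => isClosed_iInter fun _ =>
      isClosed_le continuous_const (continuous_id.dist continuous_const)
  · ext x
    simp only [mem_iUnion, mem_iInter, mem_setOf_eq, mem_compl_iff]
    constructor
    · intro hx
      obtain ⟨ε, hε, hball⟩ := Metric.isOpen_iff.1 hG x hx
      obtain ⟨n, hn⟩ := exists_nat_one_div_lt hε
      refine ⟨n, fun y hy => ?_⟩
      by_contra hlt
      push_neg at hlt
      refine hy (hball ?_)
      rw [mem_ball, dist_comm]
      linarith
    · rintro ⟨n, hn⟩
      by_contra hx
      have h1 := hn x hx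
      have h2 : (0 : ℝ) < 1 / ((n : ℝ) + 1) := by positivity
      rw [dist_self] at h1
      linarith

variable {X Y : Type*} [NormedAddCommGroup X] [NormedSpace ℝ X]
  [NormedAddCommGroup Y] [NormedSpace ℝ Y]

/-- The approximating sets: there is a linear map `L` which approximates the increments of `f`
on a ball of radius `2/(m+1)` around `x` with relative accuracy `1/(n+1)`.
The condition does not mention `f x`, which makes it stable under taking closures. -/
def diffApprox (f : X → Y) (n m : ℕ) : Set X :=
  {x | ∃ L : X →L[ℝ] Y, ∀ u v : X, ‖u‖ ≤ 2 / ((m : ℝ) + 1) → ‖v‖ ≤ 2 / ((m : ℝ) + 1) →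
      ‖f (x + u) - f (x + v) - L (u - v)‖ ≤ (‖u‖ + ‖v‖) / ((n : ℝ) + 1)}

lemma norm_le_of_sphere {T : X →L[ℝ] Y} {t c : ℝ} (ht : 0 < t)
    (h : ∀ w : X, ‖w‖ = t → ‖T w‖ ≤ c * ‖w‖) (w : X) : ‖T w‖ ≤ c * ‖w‖ := by
  rcases eq_or_ne w 0 with rfl | hw
  · simp
  · have hw' : (0 : ℝ) < ‖w‖ := norm_pos_iff.2 hw
    have h1 : ‖(t / ‖w‖) • w‖ = t := by
      rw [norm_smul, Real.norm_eq_abs, abs_of_pos (by positivity)]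
      field_simp
    have h2 := h _ h1
    rw [map_smul, norm_smul, Real.norm_eq_abs, abs_of_pos (by positivity), h1] at h2
    -- h2 : t / ‖w‖ * ‖T w‖ ≤ c * t
    have h3 : t * ‖T w‖ ≤ c * t * ‖w‖ := by
      rw [div_mul_eq_mul_div, div_le_iff₀ hw'] at h2
      linarith
    have := mul_le_mul_of_nonneg_left h3 (le_of_lt (inv_pos.2 ht))
    calc ‖T w‖ = t⁻¹ * (t * ‖T w‖) := by field_simp
      _ ≤ t⁻¹ * (c * t * ‖w‖) := this
      _ = c * ‖w‖ := by field_simp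

lemma closure_approx {f : X → Y} {n m : ℕ} {x : X}
    (hx : x ∈ closure (diffApprox f n m)) {δ : ℝ} (hδ : 0 < δ)
    (hδ' : δ ≤ 2 / ((m : ℝ) + 1) / 4) :
    ∃ L : X →L[ℝ] Y, ∀ u : X, δ ≤ ‖u‖ → ‖u‖ ≤ 2 / ((m : ℝ) + 1) - δ →
      ‖f (x + u) - f x - L u‖ ≤ 3 / ((n : ℝ) + 1) * ‖u‖ := by
  obtain ⟨x', hx', hd⟩ := Metric.mem_closure_iff.1 hx δ hδ
  obtain ⟨L, hL⟩ := hx'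
  refine ⟨L, fun u hu1 hu2 => ?_⟩
  have hd' : ‖x - x'‖ < δ := by rwa [dist_eq_norm] at hd
  have hR : (0 : ℝ) < 2 / ((m : ℝ) + 1) := by positivity
  have h1 : ‖x - x' + u‖ ≤ 2 / ((m : ℝ) + 1) :=
    le_trans (norm_add_le _ _) (by linarith)
  have h2 : ‖x - x'‖ ≤ 2 / ((m : ℝ) + 1) := by linarith
  have key := hL (x - x' + u) (x - x') h1 h2
  have e1 : x' + (x - x' + u) = x + u := by abel
  have e2 : x' + (x - x') = x := by abel
  have e3 : x - x' + u - (x - x') = u := by abel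
  rw [e1, e2, e3] at key
  have hn : (0 : ℝ) < (n : ℝ) + 1 := by positivity
  calc ‖f (x + u) - f x - L u‖ ≤ (‖x - x' + u‖ + ‖x - x'‖) / ((n : ℝ) + 1) := key
    _ ≤ (3 * ‖u‖) / ((n : ℝ) + 1) := by
        gcongr
        have := norm_add_le (x - x') u
        linarith
    _ = 3 / ((n : ℝ) + 1) * ‖u‖ := by ring

lemma ball_approx {f : X → Y} {n m : ℕ} {x : X}
    (hx : x ∈ closure (diffApprox f n m)) :
    ∃ L : X →L[ℝ] Y, ∀ u : X, ‖u‖ ≤ 2 / ((m : ℝ) + 1) / 2 →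
      ‖f (x + u) - f x - L u‖ ≤ 9 / ((n : ℝ) + 1) * ‖u‖ := by
  set R := 2 / ((m : ℝ) + 1) with hRdef
  have hR : (0 : ℝ) < R := by positivity
  obtain ⟨L₀, hL₀⟩ := closure_approx hx (show (0 : ℝ) < R / 4 by positivity) (le_refl _)
  refine ⟨L₀, fun u hu => ?_⟩
  rcases eq_or_ne u 0 with rfl | hu0
  · simp
  have hu0' : (0 : ℝ) < ‖u‖ := norm_pos_iff.2 hu0
  have hδ0 : (0 : ℝ) < min ‖u‖ (R / 4) := lt_min hu0' (by positivity)
  obtain ⟨L₁, hL₁⟩ := closure_approx hx hδ0 (min_le_right _ _)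
  have hδle : min ‖u‖ (R / 4) ≤ R / 4 := min_le_right _ _
  have est1 : ‖f (x + u) - f x - L₁ u‖ ≤ 3 / ((n : ℝ) + 1) * ‖u‖ :=
    hL₁ u (min_le_left _ _) (by linarith)
  have sph : ∀ w : X, ‖(L₀ - L₁) w‖ ≤ 6 / ((n : ℝ) + 1) * ‖w‖ := by
    apply norm_le_of_sphere (t := R / 2) (by positivity)
    intro w hw
    have e0 := hL₀ w (by rw [hw]; linarith) (by rw [hw]; linarith)
    have e1 := hL₁ w (by rw [hw]; linarith) (by rw [hw]; linarith)
    have hrw : (L₀ - L₁) w = (f (x + w) - f x - L₁ w) - (f (x + w) - f x - L₀ w) := by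
      simp only [ContinuousLinearMap.sub_apply]
      abel
    rw [hrw]
    calc ‖(f (x + w) - f x - L₁ w) - (f (x + w) - f x - L₀ w)‖
        ≤ ‖f (x + w) - f x - L₁ w‖ + ‖f (x + w) - f x - L₀ w‖ := norm_sub_le _ _
      _ ≤ 3 / ((n : ℝ) + 1) * ‖w‖ + 3 / ((n : ℝ) + 1) * ‖w‖ := add_le_add e1 e0
      _ = 6 / ((n : ℝ) + 1) * ‖w‖ := by ring
  have hrw2 : f (x + u) - f x - L₀ u = (f (x + u) - f x - L₁ u) - (L₀ - L₁) u := by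
    simp only [ContinuousLinearMap.sub_apply]
    abel
  rw [hrw2]
  calc ‖(f (x + u) - f x - L₁ u) - (L₀ - L₁) u‖
      ≤ ‖f (x + u) - f x - L₁ u‖ + ‖(L₀ - L₁) u‖ := norm_sub_le _ _
    _ ≤ 3 / ((n : ℝ) + 1) * ‖u‖ + 6 / ((n : ℝ) + 1) * ‖u‖ := add_le_add est1 (sph u)
    _ = 9 / ((n : ℝ) + 1) * ‖u‖ := by ring

lemma diff_of_closure [CompleteSpace Y] {f : X → Y} {x : X}
    (h : ∀ n : ℕ, ∃ m : ℕ, x ∈ closure (diffApprox f n m)) :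
    DifferentiableAt ℝ f x := by
  choose m hm using h
  choose L hL using fun n => ball_approx (hm n)
  set r : ℕ → ℝ := fun n => 2 / ((m n : ℝ) + 1) / 2 with hrdef
  have hr0 : ∀ n, 0 < r n := fun n => by positivity
  have hdist : ∀ p q : ℕ, ‖L p - L q‖ ≤ 9 / ((p : ℝ) + 1) + 9 / ((q : ℝ) + 1) := by
    intro p q
    apply ContinuousLinearMap.opNorm_le_bound _ (by positivity)
    apply norm_le_of_sphere (t := min (r p) (r q)) (lt_min (hr0 p) (hr0 q))
    intro w hw
    have e1 := hL p w (hw ▸ min_le_left _ _)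
    have e2 := hL q w (hw ▸ min_le_right _ _)
    have hrw : (L p - L q) w = (f (x + w) - f x - L q w) - (f (x + w) - f x - L p w) := by
      simp only [ContinuousLinearMap.sub_apply]
      abel
    rw [hrw]
    calc ‖(f (x + w) - f x - L q w) - (f (x + w) - f x - L p w)‖
        ≤ ‖f (x + w) - f x - L q w‖ + ‖f (x + w) - f x - L p w‖ := norm_sub_le _ _
      _ ≤ 9 / ((q : ℝ) + 1) * ‖w‖ + 9 / ((p : ℝ) + 1) * ‖w‖ := add_le_add e2 e1
      _ = (9 / ((p : ℝ) + 1) + 9 / ((q : ℝ) + 1)) * ‖w‖ := by ring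
  have hcauchy : CauchySeq L := by
    rw [Metric.cauchySeq_iff]
    intro ε hε
    obtain ⟨N, hN⟩ := exists_nat_one_div_lt (show (0 : ℝ) < ε / 18 by linarith)
    refine ⟨N, fun p hp q hq => ?_⟩
    have hpN : ((N : ℝ) + 1) ≤ (p : ℝ) + 1 := by
      have : (N : ℝ) ≤ p := Nat.cast_le.2 hp
      linarith
    have hqN : ((N : ℝ) + 1) ≤ (q : ℝ) + 1 := by
      have : (N : ℝ) ≤ q := Nat.cast_le.2 hq
      linarith
    have h1 : 9 / ((p : ℝ) + 1) ≤ 9 / ((N : ℝ) + 1) := by gcongr <;> linarith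
    have h2 : 9 / ((q : ℝ) + 1) ≤ 9 / ((N : ℝ) + 1) := by gcongr <;> linarith
    have h3 : 9 / ((N : ℝ) + 1) = 9 * (1 / ((N : ℝ) + 1)) := by ring
    rw [dist_eq_norm]
    calc ‖L p - L q‖ ≤ 9 / ((p : ℝ) + 1) + 9 / ((q : ℝ) + 1) := hdist p q
      _ ≤ 9 / ((N : ℝ) + 1) + 9 / ((N : ℝ) + 1) := add_le_add h1 h2
      _ = 18 * (1 / ((N : ℝ) + 1)) := by ring
      _ < 18 * (ε / 18) := by
          apply mul_lt_mul_of_pos_left hN (by norm_num)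
      _ = ε := by ring
  obtain ⟨Lim, hLim⟩ := cauchySeq_tendsto_of_complete hcauchy
  have hLn : ∀ n : ℕ, ‖L n - Lim‖ ≤ 18 / ((n : ℝ) + 1) := by
    intro n
    have t1 : Filter.Tendsto (fun q => ‖L n - L q‖) Filter.atTop (𝓝 ‖L n - Lim‖) :=
      ((Filter.Tendsto.const_sub (L n) hLim).norm)
    apply le_of_tendsto t1
    filter_upwards [Filter.eventually_ge_atTop n] with q hq
    have hqn : ((n : ℝ) + 1) ≤ (q : ℝ) + 1 := by
      have : (n : ℝ) ≤ q := Nat.cast_le.2 hq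
      linarith
    have h2 : 9 / ((q : ℝ) + 1) ≤ 9 / ((n : ℝ) + 1) := by gcongr <;> linarith
    calc ‖L n - L q‖ ≤ 9 / ((n : ℝ) + 1) + 9 / ((q : ℝ) + 1) := hdist n q
      _ ≤ 9 / ((n : ℝ) + 1) + 9 / ((n : ℝ) + 1) := by linarith
      _ = 18 / ((n : ℝ) + 1) := by ring
  have key : ∀ n : ℕ, ∀ u : X, ‖u‖ ≤ r n →
      ‖f (x + u) - f x - Lim u‖ ≤ 27 / ((n : ℝ) + 1) * ‖u‖ := by
    intro n u hu
    have h1 := hL n u hu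
    have h2 : ‖(L n - Lim) u‖ ≤ 18 / ((n : ℝ) + 1) * ‖u‖ :=
      le_trans ((L n - Lim).le_opNorm u)
        (mul_le_mul_of_nonneg_right (hLn n) (norm_nonneg u))
    have hrw : f (x + u) - f x - Lim u = (f (x + u) - f x - L n u) + (L n - Lim) u := by
      simp only [ContinuousLinearMap.sub_apply]
      abel
    rw [hrw]
    calc ‖(f (x + u) - f x - L n u) + (L n - Lim) u‖
        ≤ ‖f (x + u) - f x - L n u‖ + ‖(L n - Lim) u‖ := norm_add_le _ _
      _ ≤ 9 / ((n : ℝ) + 1) * ‖u‖ + 18 / ((n : ℝ) + 1) * ‖u‖ := add_le_add h1 h2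
      _ = 27 / ((n : ℝ) + 1) * ‖u‖ := by ring
  have hderiv : HasFDerivAt f Lim x := by
    rw [hasFDerivAt_iff_isLittleO_nhds_zero, Asymptotics.isLittleO_iff]
    intro c hc
    obtain ⟨n, hn⟩ := exists_nat_one_div_lt (show (0 : ℝ) < c / 27 by linarith)
    have hball : ∀ᶠ (h : X) in 𝓝 0, ‖h‖ ≤ r n := by
      filter_upwards [Metric.closedBall_mem_nhds (0 : X) (hr0 n)] with h hh
      simpa [mem_closedBall, dist_zero_right] using hh
    filter_upwards [hball] with u hu
    have h1 := key n u hu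
    have h2 : 27 / ((n : ℝ) + 1) ≤ c := by
      have : 27 * (1 / ((n : ℝ) + 1)) ≤ 27 * (c / 27) := by
        apply mul_le_mul_of_nonneg_left (le_of_lt hn) (by norm_num)
      calc 27 / ((n : ℝ) + 1) = 27 * (1 / ((n : ℝ) + 1)) := by ring
        _ ≤ 27 * (c / 27) := this
        _ = c := by ring
    calc ‖f (x + u) - f x - Lim u‖ ≤ 27 / ((n : ℝ) + 1) * ‖u‖ := h1
      _ ≤ c * ‖u‖ := mul_le_mul_of_nonneg_right h2 (norm_nonneg u)
  exact hderiv.differentiableAt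

lemma mem_approx_of_diff {f : X → Y} {x : X} (hf : DifferentiableAt ℝ f x) (n : ℕ) :
    ∃ m : ℕ, x ∈ diffApprox f n m := by
  have hd := hf.hasFDerivAt
  rw [hasFDerivAt_iff_isLittleO_nhds_zero] at hd
  have hε : (0 : ℝ) < 1 / (2 * ((n : ℝ) + 1)) := by positivity
  have hev := (Asymptotics.isLittleO_iff.1 hd) hε
  rw [Metric.eventually_nhds_iff] at hev
  obtain ⟨δ, hδ, hball⟩ := hev
  obtain ⟨M, hM⟩ := exists_nat_one_div_lt (show (0 : ℝ) < δ / 2 by linarith)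
  have hRδ : 2 / ((M : ℝ) + 1) < δ := by
    have : 2 * (1 / ((M : ℝ) + 1)) < 2 * (δ / 2) := by
      apply mul_lt_mul_of_pos_left hM (by norm_num)
    calc 2 / ((M : ℝ) + 1) = 2 * (1 / ((M : ℝ) + 1)) := by ring
      _ < 2 * (δ / 2) := this
      _ = δ := by ring
  refine ⟨M, fderiv ℝ f x, fun u v hu hv => ?_⟩
  have bu := hball (y := u) (by rw [dist_zero_right]; linarith)
  have bv := hball (y := v) (by rw [dist_zero_right]; linarith)
  have hrw : f (x + u) - f (x + v) - (fderiv ℝ f x) (u - v)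
      = (f (x + u) - f x - (fderiv ℝ f x) u) - (f (x + v) - f x - (fderiv ℝ f x) v) := by
    rw [map_sub]; abel
  rw [hrw]
  calc ‖(f (x + u) - f x - (fderiv ℝ f x) u) - (f (x + v) - f x - (fderiv ℝ f x) v)‖
      ≤ ‖f (x + u) - f x - (fderiv ℝ f x) u‖ + ‖f (x + v) - f x - (fderiv ℝ f x) v‖ :=
        norm_sub_le _ _
    _ ≤ 1 / (2 * ((n : ℝ) + 1)) * ‖u‖ + 1 / (2 * ((n : ℝ) + 1)) * ‖v‖ := add_le_add bu bv
    _ = (‖u‖ + ‖v‖) / (2 * ((n : ℝ) + 1)) := by ring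
    _ ≤ (‖u‖ + ‖v‖) / ((n : ℝ) + 1) := by
        gcongr <;> first | positivity | linarith

end Aux

theorem isFSigmaDelta_frechet_points
    {X Y : Type*} [NormedAddCommGroup X] [NormedSpace ℝ X] [CompleteSpace X]
    [NormedAddCommGroup Y] [NormedSpace ℝ Y] [CompleteSpace Y]
    (G : Set X) (hG : IsOpen G) (f : X → Y) :
    IsFSigmaDelta {x ∈ G | DifferentiableAt ℝ f x} := by
  refine ⟨fun n => G ∩ ⋃ m, closure (diffApprox f n m), fun n => ?_, ?_⟩
  · exact (isFSigma_of_isOpen hG).inter'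
      ⟨fun m => closure (diffApprox f n m), fun m => isClosed_closure, rfl⟩
  · ext x
    simp only [mem_iInter, mem_inter_iff, mem_iUnion, mem_sep_iff]
    constructor
    · rintro ⟨hxG, hdiff⟩ n
      obtain ⟨m, hm⟩ := mem_approx_of_diff hdiff n
      exact ⟨hxG, m, subset_closure hm⟩
    · intro h
      exact ⟨(h 0).1, diff_of_closure fun n => (h n).2⟩
end

section
/- Let X, Y be Banach spaces, G ⊆ X open, and f : G → Y a continuous mapping. Let V₁ be a closed subspace of X such that L(V₁,Y) is separable. Then there exists a meager set A ⊆ G such that for each x ∈ G \ A: if f is Fréchet differentiable at x along V₁ and along some closed subspace V₂ that is a topological complement of V₁ in X, then f is Fréchet differentiable at x. -/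
open Metric Set Topology

variable {X Y : Type*} [NormedAddCommGroup X] [NormedSpace ℝ X] [CompleteSpace X]
  [NormedAddCommGroup Y] [NormedSpace ℝ Y] [CompleteSpace Y]

/-!
Fix a dense sequence `Tᵢ` in `L(V₁, Y)` and consider the sets `E(i, c, r)` of points `y` at
distance more than `r` from `Gᶜ` such that `‖f (y + v) - f y - Tᵢ v‖ ≤ c ‖v‖` for all `v ∈ V₁` with
`‖v‖ ≤ r`, where `c` and `r` run through `1 / (n + 1)`. Continuity of `f` makes each `E(i, c, r)`
closed in an open set, so the union of the frontiers of their closures is meagre. Outside it, a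
point where `f` has a derivative `T` along `V₁` belongs to some `E(i, c, r)` with `Tᵢ` close to `T`,
hence to its interior: the increments of `f` along `V₁` are then approximated by `T` uniformly
near `x`. This uniformity is what allows one to add up the increments along `V₁` and along a
topological complement `V₂`, writing `h = π₁ h + π₂ h`.
-/

open Filter Asymptotics

theorem mem_nhds_of_closure_inter_subset {α : Type*} [TopologicalSpace α] {s U : Set α} {x : α}
    (hsU : closure s ∩ U ⊆ s) (hU : U ∈ 𝓝 x) (hx : x ∈ s) (hfr : x ∉ frontier (closure s)) :
    s ∈ 𝓝 x := by
  have hint : x ∈ interior (closure s) := by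
    rw [← self_sdiff_frontier]
    exact ⟨subset_closure hx, hfr⟩
  exact mem_of_superset (inter_mem (mem_interior_iff_mem_nhds.1 hint) hU) hsU

section

variable {𝕜 E F : Type*} [NontriviallyNormedField 𝕜] [NormedAddCommGroup E] [NormedSpace 𝕜 E]
  [NormedAddCommGroup F] [NormedSpace 𝕜 F]

def HasStrictFDerivAlongAt (f : E → F) (V : Submodule 𝕜 E) (T : V →L[𝕜] F) (x : E) : Prop :=
  (fun p : E × V => f (p.1 + p.2) - f p.1 - T p.2) =o[𝓝 (x, 0)] fun p => p.2

theorem HasStrictFDerivAlongAt.hasFDerivAt {f : E → F} {V W : Submodule 𝕜 E}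
    (hVW : V.IsTopCompl W) {T : V →L[𝕜] F} {S : W →L[𝕜] F} {x : E}
    (hT : HasStrictFDerivAlongAt f V T x) (hS : HasFDerivAt (fun w : W => f (x + w)) S 0) :
    HasFDerivAt f (T ∘L V.projectionOntoL W hVW + S ∘L W.projectionOntoL V hVW.symm) x := by
  set π₁ := V.projectionOntoL W hVW
  set π₂ := W.projectionOntoL V hVW.symm
  have hφ : Tendsto (fun h : E => (x + (π₂ h : E), π₁ h)) (𝓝 0) (𝓝 (x, 0)) :=
    Continuous.tendsto' (by fun_prop) _ _ (by simp)
  have h₁ := (hT.comp_tendsto hφ).trans_isBigO (π₁.isBigO_id (𝓝 0))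
  have h₂ := hasFDerivAt_iff_isLittleO_nhds_zero.1
    ((show HasFDerivAt (fun w : W => f (x + w)) S (π₂ 0) by simpa using hS).comp 0 π₂.hasFDerivAt)
  rw [hasFDerivAt_iff_isLittleO_nhds_zero]
  refine (h₁.add h₂).congr_left fun h => ?_
  have hsplit : x + (π₂ h : E) + (π₁ h : E) = x + h := by
    rw [add_assoc, add_comm (π₂ h : E)]
    exact congrArg (x + ·) (Submodule.projectionL_add_projectionL_eq_self hVW h)
  simp only [Function.comp_apply, hsplit, add_apply,
    ContinuousLinearMap.comp_apply, zero_add, map_zero, ZeroMemClass.coe_zero, add_zero]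
  abel

theorem norm_sub_apply_le_of_norm_sub_le {T T' : E →L[𝕜] F} {η : ℝ} (hT : ‖T - T'‖ ≤ η)
    (a : F) (v : E) : ‖a - T v‖ ≤ ‖a - T' v‖ + η * ‖v‖ :=
  calc ‖a - T v‖ = ‖(a - T' v) - (T - T') v‖ := by
        rw [sub_apply, sub_sub_sub_cancel_right]
    _ ≤ ‖a - T' v‖ + η * ‖v‖ := norm_sub_le_of_le le_rfl ((T - T').le_of_opNorm_le hT v)

-- `y ∉ cthickening r Gᶜ` is an open condition keeping `closedBall y r` inside `G`, where `f` is
-- continuous; this makes the set closed in an open set.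
def approxFDerivAlongSet (f : E → F) (G : Set E) (V : Submodule 𝕜 E) (T : V →L[𝕜] F)
    (c r : ℝ) : Set E :=
  {y | y ∉ cthickening r Gᶜ ∧ ∀ v : V, ‖v‖ ≤ r → ‖f (y + v) - f y - T v‖ ≤ c * ‖v‖}

variable {f : E → F} {G : Set E} {V : Submodule 𝕜 E} {x : E}

theorem closure_approxFDerivAlongSet_inter_subset (hG : IsOpen G) (hf : ContinuousOn f G)
    (T : V →L[𝕜] F) (c r : ℝ) :
    closure (approxFDerivAlongSet f G V T c r) ∩ (cthickening r Gᶜ)ᶜ ⊆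
      approxFDerivAlongSet f G V T c r := by
  rintro y ⟨hy, hyr⟩
  refine ⟨hyr, fun v hv => ?_⟩
  have hball : ∀ w, dist y w ≤ r → ContinuousAt f w := fun w hw =>
    hf.continuousAt <| hG.mem_nhds <| not_not.1 fun hwG =>
      hyr (mem_cthickening_of_dist_le y w r Gᶜ hwG hw)
  have hg : ContinuousAt (fun z => ‖f (z + v) - f z - T v‖) y :=
    ((((hball _ (by simpa using hv)).comp (continuous_add_const _).continuousAt).sub
      (hball y (by simpa using (norm_nonneg _).trans hv))).sub continuousAt_const).norm
  exact hg.continuousWithinAt.closure_le hy continuousWithinAt_const fun z hz => hz.2 v hv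

theorem eventually_mem_approxFDerivAlongSet (hG : IsOpen G) (hx : x ∈ G) {T₀ T : V →L[𝕜] F}
    {c : ℝ} (hT₀ : HasFDerivAt (fun v : V => f (x + v)) T₀ 0) (hT : ‖T - T₀‖ < c) :
    ∀ᶠ r in 𝓝 0, x ∈ approxFDerivAlongSet f G V T c r := by
  have hsmall : ∀ᶠ v : V in 𝓝 0, ‖f (x + v) - f x - T₀ v‖ ≤ (c - ‖T - T₀‖) * ‖v‖ := by
    simpa using isLittleO_iff.1 (hasFDerivAt_iff_isLittleO_nhds_zero.1 hT₀) (sub_pos.2 hT)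
  have hxGc : x ∉ closure Gᶜ := by rwa [hG.isClosed_compl.closure_eq, notMem_compl_iff]
  filter_upwards [eventually_notMem_cthickening_of_infEDist_pos hxGc,
    eventually_closedBall_subset hsmall] with r hr hball
  refine ⟨hr, fun v hv => ?_⟩
  calc _ ≤ ‖f (x + v) - f x - T₀ v‖ + ‖T - T₀‖ * ‖v‖ := norm_sub_apply_le_of_norm_sub_le le_rfl _ _
    _ ≤ (c - ‖T - T₀‖) * ‖v‖ + ‖T - T₀‖ * ‖v‖ := by
      gcongr; exact hball (mem_closedBall_zero_iff.2 hv)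
    _ = c * ‖v‖ := by ring

theorem eventually_norm_sub_le_of_approxFDerivAlongSet_mem_nhds {T T₀ : V →L[𝕜] F} {c r η : ℝ}
    (hS : approxFDerivAlongSet f G V T c r ∈ 𝓝 x) (hr : 0 < r) (hT : ‖T₀ - T‖ ≤ η) :
    ∀ᶠ p : E × V in 𝓝 (x, 0), ‖f (p.1 + p.2) - f p.1 - T₀ p.2‖ ≤ (c + η) * ‖p.2‖ := by
  filter_upwards [Filter.Eventually.prod_nhds hS (closedBall_mem_nhds (0 : V) hr)]
    with ⟨y, v⟩ ⟨hy, hv⟩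
  calc _ ≤ ‖f (y + v) - f y - T v‖ + η * ‖v‖ := norm_sub_apply_le_of_norm_sub_le hT _ _
    _ ≤ c * ‖v‖ + η * ‖v‖ := by gcongr; exact hy.2 v (mem_closedBall_zero_iff.1 hv)
    _ = (c + η) * ‖v‖ := by ring

def strictFDerivAlongExceptionalSet (f : E → F) (G : Set E) (V : Submodule 𝕜 E)
    (T : ℕ → V →L[𝕜] F) : Set E :=
  G ∩ ⋃ (i : ℕ) (n : ℕ) (m : ℕ),
    frontier (closure (approxFDerivAlongSet f G V (T i) (1 / (n + 1)) (1 / (m + 1))))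

theorem isMeagre_strictFDerivAlongExceptionalSet (T : ℕ → V →L[𝕜] F) :
    IsMeagre (strictFDerivAlongExceptionalSet f G V T) :=
  (isMeagre_iUnion fun _ => isMeagre_iUnion fun _ => isMeagre_iUnion fun _ =>
    (isClosed_frontier.isNowhereDense_iff.2 (interior_frontier isClosed_closure)).isMeagre).mono
    inter_subset_right

theorem hasStrictFDerivAlongAt_of_notMem_strictFDerivAlongExceptionalSet (hG : IsOpen G)
    (hf : ContinuousOn f G) {T : ℕ → V →L[𝕜] F} (hT : DenseRange T)
    (hx : x ∈ G \ strictFDerivAlongExceptionalSet f G V T) {T₀ : V →L[𝕜] F}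
    (hT₀ : HasFDerivAt (fun v : V => f (x + v)) T₀ 0) : HasStrictFDerivAlongAt f V T₀ x := by
  rw [HasStrictFDerivAlongAt, isLittleO_iff]
  intro ε hε
  obtain ⟨n, hn⟩ := exists_nat_one_div_lt (half_pos hε)
  have hc : (0 : ℝ) < 1 / (n + 1) := Nat.one_div_pos_of_nat
  obtain ⟨i, hi⟩ := hT.exists_dist_lt T₀ hc
  rw [dist_eq_norm] at hi
  obtain ⟨m, hm⟩ := (tendsto_one_div_add_atTop_nhds_zero_nat.eventually
    (eventually_mem_approxFDerivAlongSet hG hx.1 hT₀ (norm_sub_rev T₀ (T i) ▸ hi))).exists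
  have hS := mem_nhds_of_closure_inter_subset
    (closure_approxFDerivAlongSet_inter_subset hG hf _ _ _)
    (isClosed_cthickening.isOpen_compl.mem_nhds hm.1) hm
    fun hfr => hx.2 ⟨hx.1, mem_iUnion₂.2 ⟨i, n, mem_iUnion.2 ⟨m, hfr⟩⟩⟩
  filter_upwards [eventually_norm_sub_le_of_approxFDerivAlongSet_mem_nhds hS
    Nat.one_div_pos_of_nat hi.le] with p hp
  exact hp.trans (by gcongr; linarith)

end

theorem meagre_exceptional_set_along_complemented_subspace
    (V₁ : Submodule ℝ X) (hV₁ : IsClosed (V₁ : Set X))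
    [TopologicalSpace.SeparableSpace (V₁ →L[ℝ] Y)]
    (G : Set X) (hG : IsOpen G) (f : X → Y) (hf : ContinuousOn f G) :
    ∃ A : Set X, A ⊆ G ∧ IsMeagre A ∧
      ∀ x ∈ G \ A,
        (FrechetDiffAlong f V₁ x ∧
          ∃ V₂ : Submodule ℝ X, IsClosed (V₂ : Set X) ∧ IsCompl V₁ V₂ ∧
            FrechetDiffAlong f V₂ x) →
        DifferentiableAt ℝ f x := by
  obtain ⟨T, hT⟩ : ∃ T : ℕ → V₁ →L[ℝ] Y, DenseRange T :=
    ⟨_, TopologicalSpace.denseRange_denseSeq _⟩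
  refine ⟨strictFDerivAlongExceptionalSet f G V₁ T, inter_subset_left,
    isMeagre_strictFDerivAlongExceptionalSet T, fun x hx ⟨hd₁, V₂, hV₂, hV₁₂, hd₂⟩ => ?_⟩
  have hstrict := hasStrictFDerivAlongAt_of_notMem_strictFDerivAlongExceptionalSet hG hf hT hx
    (DifferentiableAt.hasFDerivAt hd₁)
  exact (hstrict.hasFDerivAt (Submodule.IsCompl.isTopCompl_of_isClosed hV₁₂ hV₁ hV₂)
    (DifferentiableAt.hasFDerivAt hd₂)).differentiableAt
end

section
/- Let X, Y be Banach spaces, G ⊆ X an open set, f : G → Y an arbitrary mapping, and V₁ a closed subspace of X such that L(V₁,Y) is separable. Then there exists a σ-upper porous set A ⊆ G such that for each x ∈ G \ A: if f is Lipschitz at x, f is Fréchet differentiable at x along V₁, and V, V₂ are closed subspaces of X with V = V₁ ⊕ V₂ (topological direct sum) such that f is Fréchet differentiable at x along V₂, then f is Fréchet differentiable at x along V. -/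
/-!
Fix a dense sequence `(Tₖ)` in `L(V₁, Y)`. For `L ∈ ℕ` and `ε, r` of the form `1 / (n + 1)`,
consider the points `x` at which, at scale `r`, `f` is `L`-Lipschitz and `Tₖ` is an
`ε`-approximate derivative along `V₁`, although `‖f (z + v) - f z - Tₖ v‖ > 2ε ‖(z - x, v)‖` for
pairs `(z, v)` arbitrarily close to `(x, 0)`. Such a set is porous: points of it close to both `z`
and `z + v` would, by their Lipschitz and approximation bounds, make the remainder at `(z, v)`
small, so a ball around `z` or `z + v` of radius comparable to its distance from `x` misses the set.

Off the union of these countably many sets, the derivative `T` of `f` along `V₁` at `x` is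
uniform: `f (z + v) - f z - T v = o(‖(z - x, v)‖)`. Then `f (x + v₁ + v₂) - f x - T v₁ - S v₂` is
this uniform remainder at the base point `x + v₂` plus the remainder of the derivative `S` along
`V₂`, and the bounded projections of `V = V₁ ⊕ V₂` make the sum `o(‖v₁ + v₂‖)`.
-/

open Metric Set Topology

variable {X Y : Type*} [NormedAddCommGroup X] [NormedSpace ℝ X] [CompleteSpace X]
  [NormedAddCommGroup Y] [NormedSpace ℝ Y] [CompleteSpace Y]

/-- `f` is Lipschitz at `x`: `limsup_{y→x} ‖f y − f x‖/‖y − x‖ < ∞`. -/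
def LipschitzAtPt (f : X → Y) (x : X) : Prop :=
  ∃ L : ℝ, ∀ᶠ y in nhds x, ‖f y - f x‖ ≤ L * ‖y - x‖

/-- `A` is (upper) porous at `x`. -/
def PorousAt {Z : Type*} [MetricSpace Z] (A : Set Z) (x : Z) : Prop :=
  ∃ c > (0 : ℝ), ∀ δ > (0 : ℝ), ∃ t, t ∈ ball x δ ∧ t ≠ x ∧ ball t (c * dist t x) ∩ A = ∅

/-- `A` is (upper) porous: porous at each of its points. -/
def Porous {Z : Type*} [MetricSpace Z] (A : Set Z) : Prop :=
  ∀ x ∈ A, PorousAt A x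

/-- `A` is σ-(upper) porous: a countable union of porous sets. -/
def SigmaPorous {Z : Type*} [MetricSpace Z] (A : Set Z) : Prop :=
  ∃ u : ℕ → Set Z, (∀ n, Porous (u n)) ∧ A = ⋃ n, u n

theorem Porous.subset {Z : Type*} [MetricSpace Z] {s t : Set Z} (ht : Porous t) (hst : s ⊆ t) :
    Porous s := by
  intro x hx
  obtain ⟨c, hc, hholes⟩ := ht x (hst hx)
  refine ⟨c, hc, fun δ hδ => ?_⟩
  obtain ⟨y, hy, hyx, hempty⟩ := hholes δ hδ
  exact ⟨y, hy, hyx, subset_empty_iff.1 (hempty ▸ inter_subset_inter_right _ hst)⟩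

theorem sigmaPorous_iUnion {Z ι : Type*} [MetricSpace Z] [Countable ι] {u : ι → Set Z}
    (hu : ∀ i, Porous (u i)) : SigmaPorous (⋃ i, u i) := by
  cases isEmpty_or_nonempty ι
  · exact ⟨fun _ => ∅, fun _ x hx => hx.elim, by simp⟩
  · obtain ⟨g, hg⟩ := exists_surjective_nat ι
    exact ⟨u ∘ g, fun n => hu (g n), (hg.iUnion_comp u).symm⟩

open Filter Asymptotics

section Porosity

variable {E F : Type*} [NormedAddCommGroup E] [Module ℝ E] [SeminormedAddCommGroup F]

def remainderAlong (f : E → F) {V₁ : Submodule ℝ E} (T : V₁ → F) (p : E × V₁) : F :=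
  f (p.1 + p.2) - f p.1 - T p.2

def nonuniformSet (f : E → F) {V₁ : Submodule ℝ E} (T : V₁ → F) (L ε r : ℝ) : Set E :=
  {x | (∀ y ∈ closedBall x r, ‖f y - f x‖ ≤ L * ‖y - x‖) ∧
    (∀ v ∈ closedBall (0 : V₁) r, ‖remainderAlong f T (x, v)‖ ≤ ε * ‖v‖) ∧
    ∃ᶠ p in 𝓝 (x, 0), 2 * ε * ‖p - (x, 0)‖ < ‖remainderAlong f T p‖}

theorem norm_remainderAlong_le_of_mem_nonuniformSet {f : E → F} {V₁ : Submodule ℝ E} {T : V₁ → F}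
    {L ε r ρ : ℝ} {x₀ x₁ z : E} {v : V₁} (hx₀ : x₀ ∈ nonuniformSet f T L ε r)
    (hx₁ : x₁ ∈ nonuniformSet f T L ε r) (hz : ‖z - x₀‖ ≤ ρ) (hzv : ‖z + v - x₁‖ ≤ 2 * ρ)
    (hρ : 3 * ρ ≤ r) (hv : ‖v‖ ≤ r) (hL : 0 ≤ L) :
    ‖remainderAlong f T (z, v)‖ ≤ 6 * L * ρ + ε * ‖v‖ := by
  obtain ⟨hLip₀, hT₀, -⟩ := hx₀
  obtain ⟨hLip₁, -, -⟩ := hx₁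
  have hρ0 : 0 ≤ ρ := by linarith [(norm_nonneg _).trans hz]
  have hshift : ‖x₀ + v - x₁‖ ≤ 3 * ρ := by
    calc ‖x₀ + v - x₁‖ = ‖(z + v - x₁) - (z - x₀)‖ := by congr 1; abel
      _ ≤ 3 * ρ := by linarith [norm_sub_le (z + v - x₁) (z - x₀)]
  have h₁ := hLip₁ (z + v) (mem_closedBall_iff_norm.2 (by linarith))
  have h₂ := hLip₁ (x₀ + v) (mem_closedBall_iff_norm.2 (by linarith))
  have h₃ := hT₀ v (mem_closedBall_zero_iff.2 hv)
  have h₄ := hLip₀ z (mem_closedBall_iff_norm.2 (by linarith))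
  calc ‖remainderAlong f T (z, v)‖
      = ‖(f (z + v) - f x₁) + (f x₁ - f (x₀ + v)) + remainderAlong f T (x₀, v) + (f x₀ - f z)‖ := by
        simp only [remainderAlong]; congr 1; abel
    _ ≤ ‖f (z + v) - f x₁‖ + ‖f x₁ - f (x₀ + v)‖ + ‖remainderAlong f T (x₀, v)‖ + ‖f x₀ - f z‖ :=
        norm_add₄_le
    _ ≤ 6 * L * ρ + ε * ‖v‖ := by
        rw [norm_sub_rev (f x₁), norm_sub_rev (f x₀)]
        have := mul_le_mul_of_nonneg_left hzv hL
        have := mul_le_mul_of_nonneg_left hshift hL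
        have := mul_le_mul_of_nonneg_left hz hL
        linarith

theorem nonuniformSet_porous (f : E → F) {V₁ : Submodule ℝ E} (T : V₁ → F) {L ε r : ℝ} (hL : 0 ≤ L)
    (hε : 0 < ε) (hr : 0 < r) : Porous (nonuniformSet f T L ε r) := by
  intro x hx
  set c := ε / (8 * (L + ε))
  have hc : 0 < c := by positivity
  have hc8 : c ≤ 1 / 8 := by
    rw [div_le_div_iff₀ (by positivity) (by norm_num)]; linarith
  have hLc : L * c ≤ ε / 8 := by
    rw [mul_div_assoc', div_le_div_iff₀ (by positivity) (by norm_num)]; nlinarith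
  refine ⟨c, hc, fun δ hδ => ?_⟩
  by_contra! hnot
  have hnear : ∀ t, dist t x < δ → ∃ y ∈ nonuniformSet f T L ε r, ‖t - y‖ ≤ c * ‖t - x‖ := by
    intro t ht
    rcases eq_or_ne t x with rfl | hne
    · exact ⟨t, hx, by simp⟩
    · obtain ⟨y, hyt, hy⟩ := hnot t ht hne
      refine ⟨y, hy, ?_⟩
      rw [← dist_eq_norm, ← dist_eq_norm, dist_comm]
      exact (mem_ball.1 hyt).le
  have hδr : 0 < min δ r / 2 := by positivity
  obtain ⟨⟨z, v⟩, hfar, hzv⟩ := (hx.2.2.and_eventually (ball_mem_nhds (x, 0) hδr)).exists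
  set s := ‖(z, v) - (x, 0)‖
  have hs : s < min δ r / 2 := by rwa [dist_eq_norm] at hzv
  have hzs : ‖z - x‖ ≤ s := norm_fst_le ((z, v) - (x, 0))
  have hvs : ‖v‖ ≤ s :=
    calc ‖v‖ = ‖((z, v) - (x, 0)).2‖ := by simp
      _ ≤ s := norm_snd_le _
  have hzvs : ‖z + v - x‖ ≤ 2 * s := by
    calc ‖z + v - x‖ = ‖(z - x) + v‖ := by congr 1; abel
      _ ≤ 2 * s := by linarith [norm_add_le (z - x) (v : E), Submodule.coe_norm v]
  have hsδ : s < δ / 2 := hs.trans_le (by gcongr; exact min_le_left _ _)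
  have hsr : s < r / 2 := hs.trans_le (by gcongr; exact min_le_right _ _)
  obtain ⟨x₀, hx₀, hz₀⟩ := hnear z (by rw [dist_eq_norm]; linarith)
  obtain ⟨x₁, hx₁, hz₁⟩ := hnear (z + v) (by rw [dist_eq_norm]; linarith)
  have hbound := norm_remainderAlong_le_of_mem_nonuniformSet (ρ := c * s) hx₀ hx₁
    (hz₀.trans (by gcongr)) (hz₁.trans (by nlinarith)) (by nlinarith) (by linarith) hL
  nlinarith [norm_nonneg ((z, v) - (x, 0))]

end Porosity

section Differentiability

variable {E F : Type*} [NormedAddCommGroup E] [NormedSpace ℝ E] [NormedAddCommGroup F]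
  [NormedSpace ℝ F]

theorem norm_remainderAlong_sub_le (f : E → F) {V₁ : Submodule ℝ E} (T T₀ : V₁ →L[ℝ] F)
    (p : E × V₁) : ‖remainderAlong f T p - remainderAlong f T₀ p‖ ≤ ‖T - T₀‖ * ‖p.2‖ := by
  calc ‖remainderAlong f T p - remainderAlong f T₀ p‖ = ‖(T - T₀) p.2‖ := by
        rw [← norm_neg]; simp only [remainderAlong, sub_apply]; abel_nf
    _ ≤ ‖T - T₀‖ * ‖p.2‖ := (T - T₀).le_opNorm p.2

theorem eventually_mem_nonuniformSet {f : E → F} {V₁ : Submodule ℝ E} {x : E} {L ε : ℝ}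
    {T T₀ : V₁ →L[ℝ] F} (hε : 0 < ε) (hLip : ∀ᶠ y in 𝓝 x, ‖f y - f x‖ ≤ L * ‖y - x‖)
    (hT₀ : HasFDerivAt (fun v : V₁ => f (x + v)) T₀ 0) (hT : ‖T - T₀‖ ≤ ε / 2)
    (hfar : ∃ᶠ p in 𝓝 (x, 0), 3 * ε * ‖p - (x, 0)‖ < ‖remainderAlong f T₀ p‖) :
    ∀ᶠ r in 𝓝 0, x ∈ nonuniformSet f T L ε r := by
  have hdiff : ∀ᶠ v in 𝓝 (0 : V₁), ‖remainderAlong f T₀ (x, v)‖ ≤ ε / 2 * ‖v‖ := by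
    simpa [remainderAlong] using (hasFDerivAt_iff_isLittleO_nhds_zero.1 hT₀).def (half_pos hε)
  have hfar' : ∃ᶠ p in 𝓝 (x, 0), 2 * ε * ‖p - (x, 0)‖ < ‖remainderAlong f T p‖ := by
    refine hfar.mono fun p hp => ?_
    have h₂ : ‖p.2‖ ≤ ‖p - (x, 0)‖ :=
      calc ‖p.2‖ = ‖(p - (x, 0)).2‖ := by simp
        _ ≤ ‖p - (x, 0)‖ := norm_snd_le _
    have := norm_remainderAlong_sub_le f T₀ T p
    rw [norm_sub_rev T₀] at this
    nlinarith [norm_le_norm_add_norm_sub' (remainderAlong f T₀ p) (remainderAlong f T p),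
      norm_nonneg (T - T₀), norm_nonneg p.2]
  filter_upwards [eventually_closedBall_subset hLip, eventually_closedBall_subset hdiff]
    with r hLip_r hdiff_r
  refine ⟨fun y hy => hLip_r hy, fun v hv => ?_, hfar'⟩
  calc ‖remainderAlong f T (x, v)‖
      ≤ ‖remainderAlong f T₀ (x, v)‖ + ‖remainderAlong f T (x, v) - remainderAlong f T₀ (x, v)‖ :=
        norm_le_norm_add_norm_sub' _ _
    _ ≤ ε / 2 * ‖v‖ + ε / 2 * ‖v‖ := by
        gcongr
        · exact hdiff_r hv
        · exact (norm_remainderAlong_sub_le f T T₀ (x, v)).trans (by gcongr)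
    _ = ε * ‖v‖ := by ring

theorem isLittleO_remainderAlong_of_forall_notMem_nonuniformSet {f : E → F} {V₁ : Submodule ℝ E}
    {x : E} {T₀ : V₁ →L[ℝ] F} {Tseq : ℕ → V₁ →L[ℝ] F} (hdense : DenseRange Tseq)
    (hLip : ∃ L, ∀ᶠ y in 𝓝 x, ‖f y - f x‖ ≤ L * ‖y - x‖)
    (hT₀ : HasFDerivAt (fun v : V₁ => f (x + v)) T₀ 0)
    (hx : ∀ k L m q : ℕ, x ∉ nonuniformSet f (Tseq k) L (1 / (m + 1)) (1 / (q + 1))) :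
    remainderAlong f T₀ =o[𝓝 (x, 0)] fun p => p - (x, 0) := by
  by_contra h
  obtain ⟨η, hη, hfar⟩ : ∃ η > 0, ∃ᶠ p in 𝓝 (x, 0),
      η * ‖p - (x, 0)‖ < ‖remainderAlong f T₀ p‖ := by
    simpa [isLittleO_iff, not_eventually] using h
  obtain ⟨L₀, hL₀⟩ := hLip
  obtain ⟨L, hL⟩ := exists_nat_ge L₀
  obtain ⟨m, hm⟩ := exists_nat_one_div_lt (div_pos hη three_pos)
  have hε : (0 : ℝ) < 1 / (m + 1) := by positivity
  obtain ⟨k, hk⟩ := hdense.exists_dist_lt T₀ (half_pos hε)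
  replace hk : ‖Tseq k - T₀‖ < 1 / (m + 1) / 2 := by
    rw [dist_comm] at hk
    -- `rw [dist_eq_norm]` fails here: on `V₁ →L[ℝ] F` the `Sub` instance of the operator-norm
    -- group agrees with `ContinuousLinearMap.sub` only up to default transparency.
    exact (by exact (dist_eq_norm (Tseq k) T₀).symm : ‖Tseq k - T₀‖ = _).trans_lt hk
  have hbad := eventually_mem_nonuniformSet (L := L) hε
    (hL₀.mono fun y hy => hy.trans (by gcongr)) hT₀ hk.le
    (hfar.mono fun p hp => lt_of_le_of_lt (by gcongr; linarith) hp)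
  obtain ⟨q, hq⟩ := (tendsto_one_div_add_atTop_nhds_zero_nat.eventually hbad).exists
  exact hx k L m q hq

theorem exists_continuousLinearEquiv_prod_of_sup_eq {V V₁ V₂ : Submodule ℝ E}
    (hinf : V₁ ⊓ V₂ = ⊥) (hsup : V₁ ⊔ V₂ = V)
    (hp : ∃ p : ℝ, ∀ v₁ ∈ V₁, ∀ v₂ ∈ V₂, max ‖v₁‖ ‖v₂‖ ≤ p * ‖v₁ + v₂‖) :
    ∃ e : (V₁ × V₂) ≃L[ℝ] V, ∀ a, (e a : E) = a.1 + a.2 := by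
  obtain ⟨p, hp⟩ := hp
  let φ : V₁ × V₂ →ₗ[ℝ] V := (V₁.subtype.coprod V₂.subtype).codRestrict V fun a =>
    hsup ▸ Submodule.add_mem_sup a.1.2 a.2.2
  have hφ : Function.Bijective φ := by
    refine ⟨?_, ?_⟩
    · rw [← LinearMap.ker_eq_bot, LinearMap.ker_codRestrict,
        LinearMap.ker_coprod_of_disjoint_range _ _ (by simpa [disjoint_iff] using hinf)]
      simp
    · rintro ⟨w, hw⟩
      obtain ⟨a, ha, b, hb, rfl⟩ := Submodule.mem_sup.1 (hsup ▸ hw)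
      exact ⟨(⟨a, ha⟩, ⟨b, hb⟩), rfl⟩
  let e := LinearEquiv.ofBijective φ hφ
  refine ⟨e.toContinuousLinearEquivOfBounds 2 p (fun a => ?_) (fun w => ?_), fun a => rfl⟩
  · calc ‖e a‖ = ‖(a.1 : E) + a.2‖ := rfl
      _ ≤ ‖a.1‖ + ‖a.2‖ := norm_add_le _ _
      _ ≤ 2 * ‖a‖ := by linarith [norm_fst_le a, norm_snd_le a]
  · obtain ⟨a, rfl⟩ := e.surjective w
    calc ‖e.symm (e a)‖ = max ‖(a.1 : E)‖ ‖(a.2 : E)‖ := by simp [Prod.norm_def]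
      _ ≤ p * ‖e a‖ := hp _ a.1.2 _ a.2.2

theorem hasFDerivAt_prod_of_isLittleO_remainderAlong {f : E → F} {V₁ V₂ : Submodule ℝ E}
    {x : E} {T : V₁ →L[ℝ] F} {S : V₂ →L[ℝ] F}
    (hT : remainderAlong f T =o[𝓝 (x, 0)] fun p => p - (x, 0))
    (hS : HasFDerivAt (fun v : V₂ => f (x + v)) S 0) :
    HasFDerivAt (fun a : V₁ × V₂ => f (x + (a.1 + a.2))) (T.coprod S) 0 := by
  rw [hasFDerivAt_iff_isLittleO_nhds_zero] at hS ⊢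
  have hshift : Tendsto (fun a : V₁ × V₂ => (x + (a.2 : E), a.1)) (𝓝 0) (𝓝 (x, 0)) :=
    (by fun_prop : Continuous fun a : V₁ × V₂ => (x + (a.2 : E), a.1)).tendsto' 0 (x, 0) (by simp)
  have h₁ : (fun a : V₁ × V₂ => remainderAlong f T (x + a.2, a.1)) =o[𝓝 0] fun a => a :=
    (hT.comp_tendsto hshift).trans_isBigO (isBigO_of_le _ fun a => by
      simp [Prod.norm_def, max_comm])
  have h₂ : (fun a : V₁ × V₂ => f (x + a.2) - f x - S a.2) =o[𝓝 0] fun a => a := by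
    refine ((hS.comp_tendsto (continuous_snd.tendsto' 0 0 rfl)).trans_isBigO
      (isBigO_of_le _ fun a => norm_snd_le a)).congr_left fun a => ?_
    simp
  refine (h₁.add h₂).congr_left fun a => ?_
  simp only [remainderAlong, zero_add, Prod.fst_zero, Prod.snd_zero, ZeroMemClass.coe_zero,
    add_zero, ContinuousLinearMap.coprod_apply]
  rw [add_comm (a.1 : E), ← add_assoc]
  abel

theorem differentiableAt_sup_of_isLittleO_remainderAlong {f : E → F} {x : E}
    {V V₁ V₂ : Submodule ℝ E} {T : V₁ →L[ℝ] F}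
    (hT : remainderAlong f T =o[𝓝 (x, 0)] fun p => p - (x, 0))
    (h₂ : DifferentiableAt ℝ (fun v : V₂ => f (x + v)) 0)
    (hinf : V₁ ⊓ V₂ = ⊥) (hsup : V₁ ⊔ V₂ = V)
    (hp : ∃ p : ℝ, ∀ v₁ ∈ V₁, ∀ v₂ ∈ V₂, max ‖v₁‖ ‖v₂‖ ≤ p * ‖v₁ + v₂‖) :
    DifferentiableAt ℝ (fun v : V => f (x + v)) 0 := by
  obtain ⟨e, he⟩ := exists_continuousLinearEquiv_prod_of_sup_eq hinf hsup hp
  have hg := hasFDerivAt_prod_of_isLittleO_remainderAlong hT h₂.hasFDerivAt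
  have hcomp : (fun v : V => f (x + v)) = (fun a : V₁ × V₂ => f (x + (a.1 + a.2))) ∘ e.symm := by
    ext v
    simp [← he]
  rw [hcomp]
  exact DifferentiableAt.comp _ (by rw [map_zero]; exact hg.differentiableAt)
    e.symm.differentiableAt

end Differentiability

theorem sigmaPorous_exceptional_set_direct_sum_general
    (V₁ : Submodule ℝ X)
    [TopologicalSpace.SeparableSpace (V₁ →L[ℝ] Y)]
    (G : Set X) (f : X → Y) :
    ∃ A : Set X, A ⊆ G ∧ SigmaPorous A ∧
      ∀ x ∈ G \ A, ∀ V V₂ : Submodule ℝ X,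
        LipschitzAtPt f x → FrechetDiffAlong f V₁ x →
        IsClosed (V : Set X) → IsClosed (V₂ : Set X) →
        V₁ ⊓ V₂ = ⊥ → V₁ ⊔ V₂ = V →
        (∃ p : ℝ, ∀ v₁ ∈ V₁, ∀ v₂ ∈ V₂, max ‖v₁‖ ‖v₂‖ ≤ p * ‖v₁ + v₂‖) →
        FrechetDiffAlong f V₂ x →
        FrechetDiffAlong f V x := by
  obtain ⟨Tseq, hdense⟩ := TopologicalSpace.exists_dense_seq (V₁ →L[ℝ] Y)
  let B : ℕ × ℕ × ℕ × ℕ → Set X := fun i =>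
    nonuniformSet f (Tseq i.1) i.2.1 (1 / (i.2.2.1 + 1)) (1 / (i.2.2.2 + 1))
  refine ⟨⋃ i, G ∩ B i, iUnion_subset fun _ => inter_subset_left,
    sigmaPorous_iUnion fun i => (nonuniformSet_porous f _ i.2.1.cast_nonneg (by positivity)
      (by positivity)).subset inter_subset_right, ?_⟩
  rintro x ⟨hxG, hxA⟩ V V₂ hLip h₁ - - hinf hsup hp h₂
  have hgood : ∀ k L m q : ℕ, x ∉ nonuniformSet f (Tseq k) L (1 / (m + 1)) (1 / (q + 1)) :=
    fun k L m q hx => hxA (mem_iUnion.2 ⟨(k, L, m, q), hxG, hx⟩)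
  have huniform := isLittleO_remainderAlong_of_forall_notMem_nonuniformSet hdense hLip
    h₁.hasFDerivAt hgood
  exact differentiableAt_sup_of_isLittleO_remainderAlong huniform h₂ hinf hsup hp

theorem sigmaPorous_exceptional_set_direct_sum
    (V₁ : Submodule ℝ X) (hV₁ : IsClosed (V₁ : Set X))
    [TopologicalSpace.SeparableSpace (V₁ →L[ℝ] Y)]
    (G : Set X) (hG : IsOpen G) (f : X → Y) :
    ∃ A : Set X, A ⊆ G ∧ SigmaPorous A ∧
      ∀ x ∈ G \ A, ∀ V V₂ : Submodule ℝ X,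
        LipschitzAtPt f x → FrechetDiffAlong f V₁ x →
        IsClosed (V : Set X) → IsClosed (V₂ : Set X) →
        V₁ ⊓ V₂ = ⊥ → V₁ ⊔ V₂ = V →
        (∃ p : ℝ, ∀ v₁ ∈ V₁, ∀ v₂ ∈ V₂, max ‖v₁‖ ‖v₂‖ ≤ p * ‖v₁ + v₂‖) →
        FrechetDiffAlong f V₂ x →
        FrechetDiffAlong f V x :=
  sigmaPorous_exceptional_set_direct_sum_general V₁ G f
end
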